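/- arXiv:math/9910126 — 8 statements merged into one kernel-verified Lean document; each statement's English description precedes it below -/
import Mathlib

section
/- The map σ^n(u) : D^n → Δ^n that sends ((s_0,…,s_p),(t_0,…,t_{n-p})) to (us_0,…,us_{p-1}, us_p + (1-u)t_0, (1-u)t_1,…,(1-u)t_{n-p}) is well-defined on the quotient D^n (i.e., respects the identification (d^{p+1}s, t) ∼ (s, d^0 t)), is continuous, and is surjective for all 0 ≤ u ≤ 1. -/
/-- A point of `⨿ₚ Δᵖ × Δ^{n-p}`, before quotienting. -/
def PrismPiece (n : ℕ) : Type :=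
  Σ p : Fin (n + 1),
    ↥(stdSimplex ℝ (Fin (p.val + 1))) × ↥(stdSimplex ℝ (Fin (n - p.val + 1)))

instance (n : ℕ) : TopologicalSpace (PrismPiece n) :=
  inferInstanceAs (TopologicalSpace
    (Σ p : Fin (n + 1),
      ↥(stdSimplex ℝ (Fin (p.val + 1))) × ↥(stdSimplex ℝ (Fin (n - p.val + 1)))))

/-- The gluing relation defining `Dⁿ`: `(d^{p+1}s, t) ∼ (s, d⁰t)`, where `d^{p+1}`
appends a final `0` coordinate and `d⁰` prepends an initial `0` coordinate. -/
def prismRel (n : ℕ) (a b : PrismPiece n) : Prop :=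
  ∃ h : b.1.val = a.1.val + 1,
    (∀ i : Fin (b.1.val + 1),
      (b.2.1 : Fin (b.1.val + 1) → ℝ) i =
        if h2 : i.val < a.1.val + 1 then (a.2.1 : Fin (a.1.val + 1) → ℝ) ⟨i.val, h2⟩ else 0) ∧
    (∀ i : Fin (n - a.1.val + 1),
      (a.2.2 : Fin (n - a.1.val + 1) → ℝ) i =
        if h2 : i.val = 0 then 0
        else (b.2.2 : Fin (n - b.1.val + 1) → ℝ)
          ⟨i.val - 1, by have := i.isLt; have := b.1.isLt; omega⟩)

/-- The formula for the prismatic subdivision map `σⁿ(u)` on each piece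
`Δᵖ × Δ^{n-p}`: `((s₀,…,s_p),(t₀,…,t_{n-p})) ↦
(us₀,…,us_{p-1}, us_p + (1-u)t₀, (1-u)t₁,…,(1-u)t_{n-p})`. -/
def sigmaRawFun (n : ℕ) (u : ℝ) (z : PrismPiece n) : Fin (n + 1) → ℝ := fun k =>
  if hk : k.val < z.1.val then u * (z.2.1 : Fin (z.1.val + 1) → ℝ) ⟨k.val, by omega⟩
  else if hk2 : k.val = z.1.val then
    u * (z.2.1 : Fin (z.1.val + 1) → ℝ) ⟨k.val, by omega⟩
      + (1 - u) * (z.2.2 : Fin (n - z.1.val + 1) → ℝ) ⟨0, by omega⟩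
  else (1 - u) * (z.2.2 : Fin (n - z.1.val + 1) → ℝ)
    ⟨k.val - z.1.val, by have := k.isLt; omega⟩
lemma stdSimplex_coe_mk' {X : Type*} [Fintype X] (s : X → ℝ) (hs : s ∈ stdSimplex ℝ X) :
    ((⟨s, hs⟩ : ↥(stdSimplex ℝ X)) : X → ℝ) = s := rfl
open Finset in
lemma sigmaRaw_mem (n : ℕ) (u : ℝ) (hu0 : 0 ≤ u) (hu1 : u ≤ 1) (z : PrismPiece n) :
    sigmaRawFun n u z ∈ stdSimplex ℝ (Fin (n + 1)) := by
  obtain ⟨⟨p, hpn⟩, ⟨s, hs⟩, ⟨t, ht⟩⟩ := z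
  have hp : p ≤ n := Nat.lt_succ_iff.mp hpn
  constructor
  · intro k
    simp only [sigmaRawFun]
    split_ifs with h1 h2
    · exact mul_nonneg hu0 (hs.1 _)
    · exact add_nonneg (mul_nonneg hu0 (hs.1 _)) (mul_nonneg (by linarith) (ht.1 _))
    · exact mul_nonneg (by linarith) (ht.1 _)
  · set S : ℕ → ℝ := fun i => if h : i < p + 1 then s ⟨i, h⟩ else 0 with hS
    set T : ℕ → ℝ := fun j => if h : j < n - p + 1 then t ⟨j, h⟩ else 0 with hT
    have hSv : ∀ (i : ℕ) (h : i < p + 1), S i = s ⟨i, h⟩ := fun i h => dif_pos h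
    have hTv : ∀ (j : ℕ) (h : j < n - p + 1), T j = t ⟨j, h⟩ := fun j h => dif_pos h
    have hSsum : ∑ i ∈ range (p + 1), S i = 1 := by
      rw [← Fin.sum_univ_eq_sum_range]
      rw [show ∑ i : Fin (p + 1), S i.val = ∑ i : Fin (p + 1), s i from
        Finset.sum_congr rfl fun i _ => by rw [hSv _ i.isLt]]
      exact hs.2
    have hTsum : ∑ j ∈ range (n - p + 1), T j = 1 := by
      rw [← Fin.sum_univ_eq_sum_range]
      rw [show ∑ j : Fin (n - p + 1), T j.val = ∑ j : Fin (n - p + 1), t j from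
        Finset.sum_congr rfl fun j _ => by rw [hTv _ j.isLt]]
      exact ht.2
    have key : ∀ k : Fin (n + 1), sigmaRawFun n u ⟨⟨p, hpn⟩, ⟨s, hs⟩, ⟨t, ht⟩⟩ k =
        (if k.val < p then u * S k.val else
          if k.val = p then u * S p + (1 - u) * T 0 else (1 - u) * T (k.val - p)) := by
      intro k
      simp only [sigmaRawFun, stdSimplex_coe_mk']
      split_ifs with h1 h2
      · rw [hSv _ (by omega)]
      · simp only [h2]
        rw [hSv _ (by omega), hTv _ (by omega)]
      · rw [hTv _ (by have := k.isLt; omega)]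
    rw [show ∑ k : Fin (n + 1), sigmaRawFun n u ⟨⟨p, hpn⟩, ⟨s, hs⟩, ⟨t, ht⟩⟩ k =
        ∑ k : Fin (n + 1), (if k.val < p then u * S k.val else
          if k.val = p then u * S p + (1 - u) * T 0 else (1 - u) * T (k.val - p)) from
      Finset.sum_congr rfl fun k _ => key k]
    rw [Fin.sum_univ_eq_sum_range (fun k => if k < p then u * S k else
      if k = p then u * S p + (1 - u) * T 0 else (1 - u) * T (k - p))]
    rw [show n + 1 = p + (n - p + 1) by omega, Finset.sum_range_add]
    have e1 : ∑ i ∈ range p, (if i < p then u * S i else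
        if i = p then u * S p + (1 - u) * T 0 else (1 - u) * T (i - p))
        = u * ∑ i ∈ range p, S i := by
      rw [Finset.mul_sum]
      refine Finset.sum_congr rfl fun i hi => ?_
      rw [if_pos (Finset.mem_range.mp hi)]
    have e2 : ∑ i ∈ range (n - p + 1), (if p + i < p then u * S (p + i) else
        if p + i = p then u * S p + (1 - u) * T 0 else (1 - u) * T (p + i - p))
        = (1 - u) * ∑ i ∈ range (n - p), T (i + 1) + (u * S p + (1 - u) * T 0) := by
      rw [Finset.sum_range_succ']
      congr 1
      · rw [Finset.mul_sum]
        refine Finset.sum_congr rfl fun i _ => ?_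
        rw [if_neg (show ¬ p + (i + 1) < p by omega),
          if_neg (show ¬ p + (i + 1) = p by omega)]
        have hidx : p + (i + 1) - p = i + 1 := by omega
        rw [hidx]
      · rw [if_neg (show ¬ p + 0 < p by omega), if_pos (show p + 0 = p by omega)]
    rw [e1, e2]
    have hS1 : ∑ i ∈ range p, S i + S p = 1 := by
      rw [← Finset.sum_range_succ]; exact hSsum
    have hT1 : T 0 + ∑ i ∈ range (n - p), T (i + 1) = 1 := by
      rw [add_comm, ← Finset.sum_range_succ']; exact hTsum
    linear_combination u * hS1 + (1 - u) * hT1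
lemma sigmaRaw_welldef (n : ℕ) (u : ℝ) (a b : PrismPiece n) (hab : prismRel n a b) :
    sigmaRawFun n u a = sigmaRawFun n u b := by
  obtain ⟨⟨pa, hpa⟩, ⟨sa, hsa⟩, ⟨ta, hta⟩⟩ := a
  obtain ⟨⟨pb, hpb⟩, ⟨sb, hsb⟩, ⟨tb, htb⟩⟩ := b
  obtain ⟨h, h1, h2⟩ := hab
  simp only [prismRel] at h h1 h2
  dsimp only [stdSimplex_coe_mk'] at h h1 h2
  subst h
  have h1' : ∀ (i : ℕ) (hi : i < pa + 1 + 1),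
      sb ⟨i, hi⟩ = if h2 : i < pa + 1 then sa ⟨i, h2⟩ else 0 := by
    intro i hi
    exact h1 ⟨i, hi⟩
  have h2' : ∀ (j : ℕ) (hj : j < n - pa + 1), j ≠ 0 →
      ∀ (i : Fin (n - (pa + 1) + 1)), i.val = j - 1 → ta ⟨j, hj⟩ = tb i := by
    intro j hj hj0 i hi
    rw [h2 ⟨j, hj⟩, dif_neg hj0]
    congr 1
    exact Fin.ext (by simpa using hi.symm)
  funext k
  have hk := k.isLt
  simp only [sigmaRawFun]
  dsimp only [stdSimplex_coe_mk']
  split_ifs with c1 c2 c3 c4 <;> try omega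
  · -- k < pa, k < pa+1
    rw [h1' k.val (by omega), dif_pos (by omega)]
  · -- k = pa : LHS mid, RHS first branch
    rw [h1' k.val (by omega), dif_pos (by omega),
      h2 ⟨0, by omega⟩, dif_pos rfl]
    ring
  · -- k = pa + 1
    rw [h1' k.val (by omega), dif_neg (by omega),
      h2' (k.val - pa) (by omega) (by omega) ⟨0, by omega⟩ (by dsimp only; omega)]
    ring
  · -- k > pa + 1
    rw [h2' (k.val - pa) (by omega) (by omega) ⟨k.val - (pa + 1), by omega⟩
      (by dsimp only; omega)]
lemma sigmaRaw_cont (n : ℕ) (u : ℝ) : Continuous (sigmaRawFun n u) := by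
  apply continuous_sigma
  intro p
  apply continuous_pi
  intro k
  have hc1 : ∀ i : Fin (p.val + 1), Continuous fun
      (a : ↥(stdSimplex ℝ (Fin (p.val + 1))) × ↥(stdSimplex ℝ (Fin (n - p.val + 1)))) =>
      (a.1 : Fin (p.val + 1) → ℝ) i :=
    fun i => ((continuous_apply i).comp continuous_subtype_val).comp continuous_fst
  have hc2 : ∀ i : Fin (n - p.val + 1), Continuous fun
      (a : ↥(stdSimplex ℝ (Fin (p.val + 1))) × ↥(stdSimplex ℝ (Fin (n - p.val + 1)))) =>
      (a.2 : Fin (n - p.val + 1) → ℝ) i :=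
    fun i => ((continuous_apply i).comp continuous_subtype_val).comp continuous_snd
  simp only [Function.comp, sigmaRawFun]
  rcases Nat.lt_trichotomy k.val p.val with h | h | h
  · simp only [dif_pos h]
    exact continuous_const.mul (hc1 ⟨k.val, by omega⟩)
  · simp only [dif_neg (show ¬ k.val < p.val by omega), dif_pos h]
    exact (continuous_const.mul (hc1 ⟨k.val, by omega⟩)).add (continuous_const.mul (hc2 ⟨0, by omega⟩))
  · simp only [dif_neg (show ¬ k.val < p.val by omega),
      dif_neg (show ¬ k.val = p.val by omega)]
    exact continuous_const.mul (hc2 ⟨k.val - p.val, by have := k.isLt; omega⟩)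
open Finset in
lemma sigmaRaw_surj (n : ℕ) (u : ℝ) (hu0 : 0 ≤ u) (hu1 : u ≤ 1)
    (y : Fin (n + 1) → ℝ) (hy : y ∈ stdSimplex ℝ (Fin (n + 1))) :
    ∃ z : PrismPiece n, sigmaRawFun n u z = y := by
  set Y : ℕ → ℝ := fun i => if h : i < n + 1 then y ⟨i, h⟩ else 0 with hYdef
  have hYv : ∀ k : Fin (n + 1), Y k.val = y k := by
    intro k; rw [hYdef]; dsimp only; rw [dif_pos k.isLt]
  have hYnn : ∀ i, 0 ≤ Y i := by
    intro i; rw [hYdef]; dsimp only; split_ifs with h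
    · exact hy.1 _
    · exact le_refl 0
  set F : ℕ → ℝ := fun m => ∑ i ∈ range m, Y i with hFdef
  have hstep : ∀ m, F (m + 1) = F m + Y m := fun m => Finset.sum_range_succ Y m
  have hF0 : F 0 = 0 := by simp [hFdef]
  have hFmono : ∀ {a b : ℕ}, a ≤ b → F a ≤ F b := by
    intro a b hab
    exact Finset.sum_le_sum_of_subset_of_nonneg (Finset.range_subset_range.mpr hab)
      (fun i _ _ => hYnn i)
  have hFnn : ∀ m, 0 ≤ F m := fun m => hF0 ▸ hFmono (Nat.zero_le m)
  have hFtop : F (n + 1) = 1 := by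
    rw [hFdef]; dsimp only
    rw [← Fin.sum_univ_eq_sum_range]
    rw [show ∑ i : Fin (n + 1), Y i.val = ∑ i : Fin (n + 1), y i from
      Finset.sum_congr rfl fun i _ => hYv i]
    exact hy.2
  have hex : ∃ m, u ≤ F (m + 1) := ⟨n, hFtop ▸ hu1⟩
  set p := Nat.find hex with hpdef
  have hup : u ≤ F (p + 1) := Nat.find_spec hex
  have hlow : ∀ q, q < p → F (q + 1) < u := fun q hq => lt_of_not_ge (Nat.find_min hex hq)
  have hple : p ≤ n := Nat.find_min' hex (hFtop ▸ hu1)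
  have hFpu : F p ≤ u := by
    rcases Nat.eq_zero_or_pos p with h | h
    · rw [h, hF0]; exact hu0
    · have h2 := hlow (p - 1) (by omega)
      rw [show p - 1 + 1 = p from by omega] at h2
      linarith
  have hupos : 0 < p → 0 < u := fun hp => lt_of_le_of_lt (hFnn 1) (hlow 0 hp)
  have hp0 : u = 0 → p = 0 := by
    intro h
    rw [hpdef, Nat.find_eq_zero]
    rw [h]; exact hFnn 1
  have hFp1one : u = 1 → F (p + 1) = 1 := by
    intro h
    refine le_antisymm ?_ (h ▸ hup)
    calc F (p + 1) ≤ F (n + 1) := hFmono (by omega)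
    _ = 1 := hFtop
  set s : Fin (p + 1) → ℝ := fun i => if i.val < p then Y i.val / u else 1 - F p / u
    with hsdef
  set t : Fin (n - p + 1) → ℝ :=
    fun j => if j.val = 0 then 1 - (1 - F (p + 1)) / (1 - u) else Y (p + j.val) / (1 - u)
    with htdef
  have hs : s ∈ stdSimplex ℝ (Fin (p + 1)) := by
    constructor
    · intro i; rw [hsdef]; dsimp only; split_ifs with h
      · exact div_nonneg (hYnn _) hu0
      · rcases Nat.eq_zero_or_pos p with hp | hp
        · rw [hp, hF0, zero_div]; norm_num
        · have h1 : 0 < u := hupos hp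
          have h2 : F p / u ≤ 1 := (div_le_one h1).mpr hFpu
          linarith
    · rw [Fin.sum_univ_castSucc]
      have e1 : ∑ i : Fin p, s i.castSucc = F p / u := by
        rw [show ∑ i : Fin p, s i.castSucc = ∑ i : Fin p, Y i.val / u from
          Finset.sum_congr rfl fun i _ => by simp [hsdef, Fin.coe_castSucc, i.isLt]]
        rw [← Finset.sum_div, hFdef]
        dsimp only
        rw [Fin.sum_univ_eq_sum_range]
      rw [e1]
      have e2 : s (Fin.last p) = 1 - F p / u := by
        rw [hsdef]; dsimp only; rw [if_neg (by simp [Fin.val_last])]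
      rw [e2]; ring
  have ht : t ∈ stdSimplex ℝ (Fin (n - p + 1)) := by
    constructor
    · intro j; rw [htdef]; dsimp only; split_ifs with h
      · rcases lt_or_eq_of_le hu1 with h1 | h1
        · have h2 : (1 - F (p + 1)) / (1 - u) ≤ 1 := (div_le_one (by linarith)).mpr
            (by linarith)
          linarith
        · rw [hFp1one h1]; norm_num
      · exact div_nonneg (hYnn _) (by linarith)
    · rw [Fin.sum_univ_succ]
      have e0 : t 0 = 1 - (1 - F (p + 1)) / (1 - u) := by
        rw [htdef]; simp
      have e1 : ∑ j : Fin (n - p), t j.succ = (1 - F (p + 1)) / (1 - u) := by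
        rw [show ∑ j : Fin (n - p), t j.succ
            = ∑ j : Fin (n - p), Y (p + 1 + j.val) / (1 - u) from
          Finset.sum_congr rfl fun j _ => by
            rw [htdef]; dsimp only
            rw [if_neg (by simp [Fin.val_succ]), Fin.val_succ,
              show p + (j.val + 1) = p + 1 + j.val by omega]]
        rw [← Finset.sum_div]
        rw [Fin.sum_univ_eq_sum_range (fun j => Y (p + 1 + j))]
        have hsplit : F (n + 1) = F (p + 1) + ∑ i ∈ range (n - p), Y (p + 1 + i) := by
          rw [hFdef]; dsimp only
          rw [show n + 1 = (p + 1) + (n - p) by omega, Finset.sum_range_add]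
        rw [hFtop] at hsplit
        rw [show ∑ i ∈ range (n - p), Y (p + 1 + i) = 1 - F (p + 1) by linarith]
      rw [e0, e1]; ring
  refine ⟨⟨⟨p, by omega⟩, ⟨s, hs⟩, ⟨t, ht⟩⟩, ?_⟩
  funext k
  have hk := k.isLt
  simp only [sigmaRawFun]
  dsimp only [stdSimplex_coe_mk']
  split_ifs with c1 c2
  · -- k < p
    have hune : u ≠ 0 := ne_of_gt (hupos (by omega))
    simp only [hsdef]
    rw [if_pos c1, ← hYv k, mul_comm, div_mul_cancel₀ _ hune]
  · -- k = p
    simp only [hsdef, htdef]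
    rw [if_neg (by omega), if_pos trivial, ← hYv k, c2]
    have hYp : Y p = F (p + 1) - F p := by rw [hstep]; ring
    rcases eq_or_lt_of_le hu0 with h0 | h0
    · -- u = 0
      have hpz : p = 0 := hp0 h0.symm
      rw [hYp, ← h0, hpz, hF0]
      norm_num
    rcases lt_or_eq_of_le hu1 with h1 | h1
    · -- 0 < u < 1
      have hune : u ≠ 0 := ne_of_gt h0
      have h1ne : (1 : ℝ) - u ≠ 0 := by linarith
      rw [hYp]
      field_simp
      ring
    · -- u = 1
      rw [hYp, hFp1one h1, h1]
      norm_num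
  · -- k > p
    simp only [htdef]
    rw [if_neg (show ¬(k.val - p = 0) by omega),
      show p + (k.val - p) = k.val by omega, ← hYv k]
    rcases lt_or_eq_of_le hu1 with h1 | h1
    · rw [mul_comm, div_mul_cancel₀ _ (by linarith : (1:ℝ) - u ≠ 0)]
    · have hYk : Y k.val = 0 := by
        have hk1 : F (p + 1) ≤ F k.val := hFmono (by omega)
        have hk2 : F (k.val + 1) ≤ F (n + 1) := hFmono (by omega)
        have := hstep k.val
        have := hYnn k.val
        rw [hFp1one h1] at hk1
        rw [hFtop] at hk2
        linarith
      rw [hYk, h1]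
      norm_num

/-- For `0 ≤ u ≤ 1`, the prismatic subdivision formula takes values in the standard
simplex `Δⁿ`, descends to a well-defined map `σⁿ(u) : Dⁿ → Δⁿ` on the quotient
`Dⁿ = (⨿ₚ Δᵖ × Δ^{n-p})/∼`, and this map is continuous and surjective onto `Δⁿ`. -/
theorem sigma_welldefined_continuous_surjective (n : ℕ) (u : ℝ) (hu0 : 0 ≤ u) (hu1 : u ≤ 1) :
    (∀ z : PrismPiece n, sigmaRawFun n u z ∈ stdSimplex ℝ (Fin (n + 1))) ∧
    ∃ g : Quot (prismRel n) → (Fin (n + 1) → ℝ),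
      Continuous g ∧
      (∀ z : PrismPiece n, g (Quot.mk _ z) = sigmaRawFun n u z) ∧
      (∀ y ∈ stdSimplex ℝ (Fin (n + 1)), ∃ w, g w = y) := by
  refine ⟨fun z => sigmaRaw_mem n u hu0 hu1 z,
    Quot.lift (sigmaRawFun n u) (sigmaRaw_welldef n u),
    continuous_quot_lift _ (sigmaRaw_cont n u),
    fun z => rfl, ?_⟩
  intro y hy
  obtain ⟨z, hz⟩ := sigmaRaw_surj n u hu0 hu1 y hy
  exact ⟨Quot.mk _ z, hz⟩
end

section
/- For 0 < u < 1, the prismatic subdivision map σ^n(u) : D^n → Δ^n is a homeomorphism. -/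
namespace SigmaAux

open Finset

variable (n : ℕ)

/-- extend a function on `Fin (m+1)` to `ℕ` by zero. -/
noncomputable def ext (m : ℕ) (y : Fin (m + 1) → ℝ) : ℕ → ℝ := fun i =>
  if h : i < m + 1 then y ⟨i, h⟩ else 0

noncomputable def sfun (z : PrismPiece n) : ℕ → ℝ :=
  ext z.1.val (z.2.1 : Fin (z.1.val + 1) → ℝ)

noncomputable def tfun (z : PrismPiece n) : ℕ → ℝ :=
  ext (n - z.1.val) (z.2.2 : Fin (n - z.1.val + 1) → ℝ)

lemma ext_nonneg (m : ℕ) (y : Fin (m + 1) → ℝ) (hy : ∀ i, 0 ≤ y i) (i : ℕ) :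
    0 ≤ ext m y i := by
  unfold ext; split_ifs
  · exact hy _
  · exact le_refl 0

lemma ext_sum (m : ℕ) (y : Fin (m + 1) → ℝ) (hy : ∑ i, y i = 1) :
    ∑ i ∈ range (m + 1), ext m y i = 1 := by
  rw [← Fin.sum_univ_eq_sum_range (ext m y) (m + 1), ← hy]
  exact Finset.sum_congr rfl fun i _ => by simp [ext, i.isLt]

lemma sfun_nonneg (z : PrismPiece n) (i : ℕ) : 0 ≤ sfun n z i :=
  ext_nonneg _ _ z.2.1.2.1 i

lemma tfun_nonneg (z : PrismPiece n) (j : ℕ) : 0 ≤ tfun n z j :=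
  ext_nonneg _ _ z.2.2.2.1 j

lemma sfun_sum (z : PrismPiece n) : ∑ i ∈ range (z.1.val + 1), sfun n z i = 1 :=
  ext_sum _ _ z.2.1.2.2

lemma tfun_sum (z : PrismPiece n) : ∑ j ∈ range (n - z.1.val + 1), tfun n z j = 1 :=
  ext_sum _ _ z.2.2.2.2

lemma sfun_hi (z : PrismPiece n) (i : ℕ) (h : z.1.val + 1 ≤ i) : sfun n z i = 0 := by
  unfold sfun ext; rw [dif_neg]; omega

lemma tfun_hi (z : PrismPiece n) (j : ℕ) (h : n - z.1.val + 1 ≤ j) : tfun n z j = 0 := by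
  unfold tfun ext; rw [dif_neg]; omega

variable (u : ℝ)

lemma sigma_eq (z : PrismPiece n) (k : Fin (n + 1)) :
    sigmaRawFun n u z k =
      if k.val < z.1.val then u * sfun n z k.val
      else if k.val = z.1.val then u * sfun n z k.val + (1 - u) * tfun n z 0
      else (1 - u) * tfun n z (k.val - z.1.val) := by
  have hk := k.isLt
  have hp := z.1.isLt
  unfold sigmaRawFun sfun tfun ext
  split_ifs with h1 h2 <;> first | rfl | omega

noncomputable def xfun (z : PrismPiece n) : ℕ → ℝ := ext n (sigmaRawFun n u z)

lemma xfun_eq (z : PrismPiece n) (k : ℕ) (hk : k < n + 1) :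
    xfun n u z k = sigmaRawFun n u z ⟨k, hk⟩ := dif_pos hk

lemma xfun_eq' (z : PrismPiece n) (k : ℕ) (hk : k < n + 1) :
    xfun n u z k =
      if k < z.1.val then u * sfun n z k
      else if k = z.1.val then u * sfun n z k + (1 - u) * tfun n z 0
      else (1 - u) * tfun n z (k - z.1.val) := by
  rw [xfun_eq n u z k hk, sigma_eq]

lemma L1 (z : PrismPiece n) : ∀ k, k ≤ z.1.val →
    ∑ i ∈ range k, xfun n u z i = u * ∑ i ∈ range k, sfun n z i := by
  intro k
  induction k with
  | zero => simp
  | succ k ih =>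
    intro hk
    have hp := z.1.isLt
    have hkn : k < n + 1 := by omega
    rw [sum_range_succ, sum_range_succ, ih (by omega), mul_add]
    congr 1
    rw [xfun_eq' n u z k hkn, if_pos (show k < z.1.val by omega)]

lemma L2 (z : PrismPiece n) :
    ∑ i ∈ range (z.1.val + 1), xfun n u z i = u + (1 - u) * tfun n z 0 := by
  have hp := z.1.isLt
  rw [sum_range_succ, L1 n u z _ le_rfl, xfun_eq' n u z _ (by omega),
    if_neg (lt_irrefl _), if_pos rfl]
  have h := sfun_sum n z
  rw [sum_range_succ] at h
  have h2 : ∑ i ∈ range z.1.val, sfun n z i = 1 - sfun n z z.1.val := by linarith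
  rw [h2]; ring

lemma L3 (z : PrismPiece n) : ∀ k, z.1.val + 1 ≤ k → k ≤ n + 1 →
    ∑ i ∈ range k, xfun n u z i = u + (1 - u) * ∑ j ∈ range (k - z.1.val), tfun n z j := by
  intro k hk1
  induction k, hk1 using Nat.le_induction with
  | base =>
    intro _
    rw [L2, show z.1.val + 1 - z.1.val = 1 by omega, sum_range_one]
  | succ k hk ih =>
    intro hk2
    rw [sum_range_succ, ih (by omega), show k + 1 - z.1.val = (k - z.1.val) + 1 by omega,
      sum_range_succ, mul_add, xfun_eq' n u z k (by omega),
      if_neg (show ¬(k < z.1.val) by omega), if_neg (show ¬(k = z.1.val) by omega)]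
    ring

lemma xfun_sum (z : PrismPiece n) : ∑ i ∈ range (n + 1), xfun n u z i = 1 := by
  have hp := z.1.isLt
  rw [L3 n u z (n + 1) (by omega) le_rfl, show n + 1 - z.1.val = n - z.1.val + 1 by omega,
    tfun_sum]
  ring

lemma sigma_mem (hu0 : 0 < u) (hu1 : u < 1) (z : PrismPiece n) :
    sigmaRawFun n u z ∈ stdSimplex ℝ (Fin (n + 1)) := by
  refine ⟨fun k => ?_, ?_⟩
  · rw [sigma_eq]
    have h1 := sfun_nonneg n z k.val
    have h2 := tfun_nonneg n z 0
    have h3 := tfun_nonneg n z (k.val - z.1.val)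
    split_ifs <;> nlinarith
  · rw [← xfun_sum n u z, ← Fin.sum_univ_eq_sum_range (xfun n u z) (n + 1)]
    exact Finset.sum_congr rfl fun k _ => by rw [xfun_eq n u z k.val k.isLt, Fin.eta]

noncomputable def fS (hu0 : 0 < u) (hu1 : u < 1) (z : PrismPiece n) :
    ↥(stdSimplex ℝ (Fin (n + 1))) := ⟨sigmaRawFun n u z, sigma_mem n u hu0 hu1 z⟩

lemma sigma_rel {a b : PrismPiece n} (hab : prismRel n a b) :
    sigmaRawFun n u a = sigmaRawFun n u b := by
  obtain ⟨h, hs, ht⟩ := hab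
  have hbn := b.1.isLt
  have hpn : a.1.val + 1 ≤ n := by omega
  have hs' : ∀ i : ℕ, i < a.1.val + 1 → sfun n b i = sfun n a i := by
    intro i hi
    have hib : i < b.1.val + 1 := by omega
    have h1 := hs ⟨i, hib⟩
    rw [dif_pos (show i < a.1.val + 1 from hi)] at h1
    unfold sfun ext
    rw [dif_pos hib, dif_pos hi]
    exact h1
  have hs'' : sfun n b (a.1.val + 1) = 0 := by
    have hib : a.1.val + 1 < b.1.val + 1 := by omega
    have h1 := hs ⟨a.1.val + 1, hib⟩
    rw [dif_neg (show ¬(a.1.val + 1 < a.1.val + 1) from by omega)] at h1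
    unfold sfun ext
    rw [dif_pos hib]
    exact h1
  have ht0 : tfun n a 0 = 0 := by
    have h0 : (0 : ℕ) < n - a.1.val + 1 := by omega
    have h1 := ht ⟨0, h0⟩
    rw [dif_pos (show (0 : ℕ) = 0 from rfl)] at h1
    unfold tfun ext
    rw [dif_pos h0]
    exact h1
  have ht' : ∀ j : ℕ, tfun n b j = tfun n a (j + 1) := by
    intro j
    by_cases hj : j < n - b.1.val + 1
    · have hja : j + 1 < n - a.1.val + 1 := by rw [h] at hj; omega
      have h1 := ht ⟨j + 1, hja⟩
      rw [dif_neg (show ¬(j + 1 = 0) from by omega)] at h1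
      unfold tfun ext
      rw [dif_pos hj, dif_pos hja, h1]
      rfl
    · rw [tfun_hi n b j (by omega),
        tfun_hi n a (j + 1) (by rw [h] at hj; omega)]
  funext k
  have hk := k.isLt
  rw [sigma_eq, sigma_eq, h]
  rcases lt_trichotomy k.val a.1.val with h1 | h1 | h1
  · rw [if_pos h1, if_pos (show k.val < a.1.val + 1 from by omega), hs' k.val (by omega)]
  · rw [if_neg (show ¬(k.val < a.1.val) from by omega), if_pos h1,
      if_pos (show k.val < a.1.val + 1 from by omega), hs' k.val (by omega), ht0]
    ring
  · by_cases h2 : k.val = a.1.val + 1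
    · rw [if_neg (show ¬(k.val < a.1.val) from by omega),
        if_neg (show ¬(k.val = a.1.val) from by omega),
        if_neg (show ¬(k.val < a.1.val + 1) from by omega), if_pos h2, h2, hs'',
        show a.1.val + 1 - a.1.val = 1 from by omega, ht' 0]
      ring
    · rw [if_neg (show ¬(k.val < a.1.val) from by omega),
        if_neg (show ¬(k.val = a.1.val) from by omega),
        if_neg (show ¬(k.val < a.1.val + 1) from by omega), if_neg h2,
        ht' (k.val - (a.1.val + 1)),
        show k.val - (a.1.val + 1) + 1 = k.val - a.1.val from by omega]

-- the inverse map

open Classical in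
lemma exists_pidx (hu1 : u < 1) (x : ↥(stdSimplex ℝ (Fin (n + 1)))) :
    ∃ k, u ≤ ∑ i ∈ range (k + 1), ext n (x : Fin (n + 1) → ℝ) i :=
  ⟨n, by rw [ext_sum n (x : Fin (n + 1) → ℝ) x.2.2]; linarith⟩

open Classical in
noncomputable def pidx (hu1 : u < 1) (x : ↥(stdSimplex ℝ (Fin (n + 1)))) : ℕ :=
  Nat.find (exists_pidx n u hu1 x)

open Classical in
lemma pidx_le_of (hu1 : u < 1) (x : ↥(stdSimplex ℝ (Fin (n + 1)))) {k : ℕ}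
    (hk : u ≤ ∑ i ∈ range (k + 1), ext n (x : Fin (n + 1) → ℝ) i) :
    pidx n u hu1 x ≤ k :=
  Nat.find_le hk

lemma pidx_le (hu1 : u < 1) (x : ↥(stdSimplex ℝ (Fin (n + 1)))) : pidx n u hu1 x ≤ n :=
  pidx_le_of n u hu1 x (by rw [ext_sum n (x : Fin (n + 1) → ℝ) x.2.2]; linarith)

open Classical in
lemma pidx_spec (hu1 : u < 1) (x : ↥(stdSimplex ℝ (Fin (n + 1)))) :
    u ≤ ∑ i ∈ range (pidx n u hu1 x + 1), ext n (x : Fin (n + 1) → ℝ) i :=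
  Nat.find_spec (exists_pidx n u hu1 x)

open Classical in
lemma pidx_min (hu1 : u < 1) (x : ↥(stdSimplex ℝ (Fin (n + 1)))) {k : ℕ}
    (hk : k < pidx n u hu1 x) :
    ∑ i ∈ range (k + 1), ext n (x : Fin (n + 1) → ℝ) i < u :=
  lt_of_not_ge (Nat.find_min (exists_pidx n u hu1 x) hk)

lemma pidx_lt (hu0 : 0 < u) (hu1 : u < 1) (x : ↥(stdSimplex ℝ (Fin (n + 1)))) :
    ∑ i ∈ range (pidx n u hu1 x), ext n (x : Fin (n + 1) → ℝ) i < u := by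
  rcases Nat.eq_zero_or_pos (pidx n u hu1 x) with h | h
  · rw [h]; simpa using hu0
  · have h2 := pidx_min n u hu1 x (show pidx n u hu1 x - 1 < pidx n u hu1 x by omega)
    rwa [show pidx n u hu1 x - 1 + 1 = pidx n u hu1 x by omega] at h2

noncomputable def gsN (x : ℕ → ℝ) (p : ℕ) : ℕ → ℝ := fun i =>
  if i < p then x i / u else (u - ∑ i ∈ range p, x i) / u

noncomputable def gtN (x : ℕ → ℝ) (p : ℕ) : ℕ → ℝ := fun j =>
  if j = 0 then ((∑ i ∈ range (p + 1), x i) - u) / (1 - u) else x (p + j) / (1 - u)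

lemma sum_shift (x : ℕ → ℝ) (a : ℕ) : ∀ m,
    ∑ j ∈ range m, x (a + j) = ∑ i ∈ range (a + m), x i - ∑ i ∈ range a, x i := by
  intro m
  induction m with
  | zero => simp
  | succ m ih =>
    rw [sum_range_succ, ih, show a + (m + 1) = (a + m) + 1 from rfl, sum_range_succ]
    ring

lemma gsN_mem (hu0 : 0 < u) (x : ℕ → ℝ) (p : ℕ) (hx0 : ∀ i, 0 ≤ x i)
    (h1 : ∑ i ∈ range p, x i ≤ u) :
    (fun i : Fin (p + 1) => gsN u x p i.val) ∈ stdSimplex ℝ (Fin (p + 1)) := by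
  constructor
  · intro i
    show 0 ≤ gsN u x p i.val
    simp only [gsN]
    split_ifs
    · exact div_nonneg (hx0 _) hu0.le
    · exact div_nonneg (by linarith) hu0.le
  · rw [Fin.sum_univ_eq_sum_range (gsN u x p) (p + 1), sum_range_succ]
    rw [Finset.sum_congr rfl (fun i hi => show gsN u x p i = x i / u by
      simp only [gsN]; rw [if_pos (mem_range.mp hi)])]
    rw [show gsN u x p p = (u - ∑ i ∈ range p, x i) / u by
      simp only [gsN]; rw [if_neg (lt_irrefl p)]]
    rw [← sum_div, ← add_div]
    field_simp
    ring

lemma gtN_mem (hu1 : u < 1) (x : ℕ → ℝ) (p : ℕ) (hp : p ≤ n) (hx0 : ∀ i, 0 ≤ x i)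
    (hsum : ∑ i ∈ range (n + 1), x i = 1)
    (h2 : u ≤ ∑ i ∈ range (p + 1), x i) :
    (fun j : Fin (n - p + 1) => gtN u x p j.val) ∈ stdSimplex ℝ (Fin (n - p + 1)) := by
  have hu1' : (0 : ℝ) < 1 - u := by linarith
  constructor
  · intro j
    show 0 ≤ gtN u x p j.val
    simp only [gtN]
    split_ifs
    · exact div_nonneg (by linarith) hu1'.le
    · exact div_nonneg (hx0 _) hu1'.le
  · rw [Fin.sum_univ_eq_sum_range (gtN u x p) (n - p + 1), Finset.sum_range_succ']
    have e1 : ∀ j ∈ range (n - p), gtN u x p (j + 1) = x ((p + 1) + j) / (1 - u) := by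
      intro j _
      simp only [gtN]
      rw [if_neg (Nat.succ_ne_zero j), show p + (j + 1) = (p + 1) + j by omega]
    rw [Finset.sum_congr rfl e1, show gtN u x p 0 = ((∑ i ∈ range (p + 1), x i) - u) / (1 - u) by simp [gtN], ← sum_div, sum_shift x (p + 1) (n - p),
      show p + 1 + (n - p) = n + 1 by omega, hsum, ← add_div]
    field_simp
    ring

noncomputable def gS (hu0 : 0 < u) (hu1 : u < 1) (x : ↥(stdSimplex ℝ (Fin (n + 1)))) :
    PrismPiece n :=
  ⟨⟨pidx n u hu1 x, by have := pidx_le n u hu1 x; omega⟩,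
   ⟨fun i => gsN u (ext n (x : Fin (n + 1) → ℝ)) (pidx n u hu1 x) i.val,
     gsN_mem u hu0 _ _ (ext_nonneg n _ x.2.1) (pidx_lt n u hu0 hu1 x).le⟩,
   ⟨fun j => gtN u (ext n (x : Fin (n + 1) → ℝ)) (pidx n u hu1 x) j.val,
     gtN_mem n u hu1 _ _ (pidx_le n u hu1 x) (ext_nonneg n _ x.2.1)
       (ext_sum n _ x.2.2) (pidx_spec n u hu1 x)⟩⟩

lemma sfun_gS (hu0 : 0 < u) (hu1 : u < 1) (x : ↥(stdSimplex ℝ (Fin (n + 1)))) (i : ℕ)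
    (hi : i < pidx n u hu1 x + 1) :
    sfun n (gS n u hu0 hu1 x) i = gsN u (ext n (x : Fin (n + 1) → ℝ)) (pidx n u hu1 x) i := by
  unfold sfun gS ext
  rw [dif_pos hi]; rfl

lemma tfun_gS (hu0 : 0 < u) (hu1 : u < 1) (x : ↥(stdSimplex ℝ (Fin (n + 1)))) (j : ℕ)
    (hj : j < n - pidx n u hu1 x + 1) :
    tfun n (gS n u hu0 hu1 x) j = gtN u (ext n (x : Fin (n + 1) → ℝ)) (pidx n u hu1 x) j := by
  unfold tfun gS ext
  rw [dif_pos hj]; rfl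

lemma fg (hu0 : 0 < u) (hu1 : u < 1) (x : ↥(stdSimplex ℝ (Fin (n + 1)))) :
    sigmaRawFun n u (gS n u hu0 hu1 x) = (x : Fin (n + 1) → ℝ) := by
  have hu0' : u ≠ 0 := ne_of_gt hu0
  have hu1' : (1 : ℝ) - u ≠ 0 := by
    intro hcon; exact absurd (by linarith : u = 1) (ne_of_lt hu1)
  have hpn : pidx n u hu1 x ≤ n := pidx_le n u hu1 x
  funext k
  have hk := k.isLt
  have hxe : ext n (x : Fin (n + 1) → ℝ) k.val = (x : Fin (n + 1) → ℝ) k := by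
    unfold ext; rw [dif_pos hk]
  rw [sigma_eq, show ((gS n u hu0 hu1 x).1.val) = pidx n u hu1 x from rfl]
  rcases lt_trichotomy k.val (pidx n u hu1 x) with h1 | h1 | h1
  · rw [if_pos (show k.val < pidx n u hu1 x from h1),
      sfun_gS n u hu0 hu1 x k.val (by omega)]
    simp only [gsN]
    rw [if_pos h1, mul_comm, div_mul_cancel₀ _ hu0', hxe]
  · rw [if_neg (show ¬(k.val < pidx n u hu1 x) from by omega),
      if_pos (show k.val = pidx n u hu1 x from h1),
      sfun_gS n u hu0 hu1 x k.val (by omega),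
      tfun_gS n u hu0 hu1 x 0 (by omega)]
    simp only [gsN, gtN, if_true]
    rw [if_neg (show ¬(k.val < pidx n u hu1 x) from by omega),
      mul_comm u, div_mul_cancel₀ _ hu0', mul_comm (1 - u), div_mul_cancel₀ _ hu1',
      sum_range_succ, ← h1, hxe]
    ring
  · rw [if_neg (show ¬(k.val < pidx n u hu1 x) from by omega),
      if_neg (show ¬(k.val = pidx n u hu1 x) from by omega),
      tfun_gS n u hu0 hu1 x (k.val - pidx n u hu1 x) (by omega)]
    simp only [gtN]
    rw [if_neg (show ¬(k.val - pidx n u hu1 x = 0) from by omega),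
      mul_comm, div_mul_cancel₀ _ hu1',
      show pidx n u hu1 x + (k.val - pidx n u hu1 x) = k.val from by omega, hxe]

lemma piece_ext {a b : PrismPiece n} (h1 : a.1.val = b.1.val)
    (h2 : ∀ i, sfun n a i = sfun n b i) (h3 : ∀ j, tfun n a j = tfun n b j) : a = b := by
  obtain ⟨⟨p, hp⟩, s, t⟩ := a
  obtain ⟨⟨q, hq⟩, s', t'⟩ := b
  simp only at h1
  subst h1
  have hs : s = s' := by
    apply Subtype.ext
    funext i
    have h4 := h2 i.val
    unfold sfun ext at h4
    simp only at h4
    rw [dif_pos i.isLt, dif_pos i.isLt] at h4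
    exact h4
  have ht : t = t' := by
    apply Subtype.ext
    funext j
    have h4 := h3 j.val
    unfold tfun ext at h4
    simp only at h4
    rw [dif_pos j.isLt, dif_pos j.isLt] at h4
    exact h4
  subst hs; subst ht; rfl

lemma pidx_fS (hu0 : 0 < u) (hu1 : u < 1) (z : PrismPiece n)
    (hz : z.1.val = 0 ∨ sfun n z z.1.val ≠ 0) :
    pidx n u hu1 (fS n u hu0 hu1 z) = z.1.val := by
  have hpn := z.1.isLt
  have hxx : ext n ((fS n u hu0 hu1 z : Fin (n + 1) → ℝ)) = xfun n u z := rfl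
  have hle : pidx n u hu1 (fS n u hu0 hu1 z) ≤ z.1.val := by
    apply pidx_le_of
    rw [hxx, L2]
    have ht := tfun_nonneg n z 0
    nlinarith
  have hge : ∀ k, k < z.1.val → ∑ i ∈ range (k + 1), xfun n u z i < u := by
    intro k hk
    rw [L1 n u z (k + 1) (by omega)]
    have hsp : sfun n z z.1.val ≠ 0 := by
      rcases hz with h | h
      · omega
      · exact h
    have hsp' : 0 < sfun n z z.1.val := lt_of_le_of_ne (sfun_nonneg n z z.1.val) (Ne.symm hsp)
    have hsplit : ∑ i ∈ range (k + 1), sfun n z i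
        + ∑ i ∈ Ico (k + 1) (z.1.val + 1), sfun n z i
        = ∑ i ∈ range (z.1.val + 1), sfun n z i := by
      simp only [range_eq_Ico]
      exact Finset.sum_Ico_consecutive _ (by omega) (by omega)
    have hone : ∑ i ∈ range (z.1.val + 1), sfun n z i = 1 := sfun_sum n z
    have hsingle : sfun n z z.1.val ≤ ∑ i ∈ Ico (k + 1) (z.1.val + 1), sfun n z i := by
      apply Finset.single_le_sum (fun i _ => sfun_nonneg n z i)
      rw [Finset.mem_Ico]
      omega
    have hlt1 : ∑ i ∈ range (k + 1), sfun n z i < 1 := by linarith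
    have := mul_lt_mul_of_pos_left hlt1 hu0
    linarith
  rcases Nat.lt_or_ge (pidx n u hu1 (fS n u hu0 hu1 z)) z.1.val with h | h
  · exfalso
    have hspec := pidx_spec n u hu1 (fS n u hu0 hu1 z)
    rw [hxx] at hspec
    exact absurd hspec (not_le.mpr (hge _ h))
  · omega

lemma gf_eq (hu0 : 0 < u) (hu1 : u < 1) (z : PrismPiece n)
    (hz : z.1.val = 0 ∨ sfun n z z.1.val ≠ 0) :
    gS n u hu0 hu1 (fS n u hu0 hu1 z) = z := by
  have hu0' : u ≠ 0 := ne_of_gt hu0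
  have hu1' : (1 : ℝ) - u ≠ 0 := by
    intro hcon; exact absurd (by linarith : u = 1) (ne_of_lt hu1)
  have hpn : z.1.val < n + 1 := z.1.isLt
  have hP : pidx n u hu1 (fS n u hu0 hu1 z) = z.1.val := pidx_fS n u hu0 hu1 z hz
  have hxx : ext n ((fS n u hu0 hu1 z : Fin (n + 1) → ℝ)) = xfun n u z := rfl
  apply piece_ext
  · exact hP
  · intro i
    by_cases hi : i < z.1.val + 1
    · rw [sfun_gS n u hu0 hu1 _ i (by rw [hP]; omega)]
      simp only [gsN]
      rw [hP, hxx]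
      by_cases hip : i < z.1.val
      · rw [if_pos hip, xfun_eq' n u z i (by omega), if_pos hip,
          mul_comm, mul_div_assoc, div_self hu0', mul_one]
      · have hip' : i = z.1.val := by omega
        rw [if_neg hip, L1 n u z z.1.val le_rfl]
        have hone := sfun_sum n z
        rw [sum_range_succ] at hone
        rw [hip', show ∑ i ∈ range z.1.val, sfun n z i = 1 - sfun n z z.1.val from by linarith,
          show u - u * (1 - sfun n z z.1.val) = sfun n z z.1.val * u from by ring,
          mul_div_assoc, div_self hu0', mul_one]
    · rw [sfun_hi n _ i (show pidx n u hu1 (fS n u hu0 hu1 z) + 1 ≤ i from by rw [hP]; omega),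
        sfun_hi n z i (by omega)]
  · intro j
    by_cases hj : j < n - z.1.val + 1
    · rw [tfun_gS n u hu0 hu1 _ j (by rw [hP]; omega)]
      simp only [gtN]
      rw [hP, hxx]
      by_cases hj0 : j = 0
      · rw [if_pos hj0, L2, hj0,
          show u + (1 - u) * tfun n z 0 - u = tfun n z 0 * (1 - u) from by ring,
          mul_div_assoc, div_self hu1', mul_one]
      · rw [if_neg hj0, xfun_eq' n u z (z.1.val + j) (by omega),
          if_neg (show ¬(z.1.val + j < z.1.val) from by omega),
          if_neg (show ¬(z.1.val + j = z.1.val) from by omega),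
          show z.1.val + j - z.1.val = j from by omega,
          mul_comm, mul_div_assoc, div_self hu1', mul_one]
    · rw [tfun_hi n _ j (show n - pidx n u hu1 (fS n u hu0 hu1 z) + 1 ≤ j from by
          rw [hP]; omega),
        tfun_hi n z j (by omega)]

lemma step (z : PrismPiece n) (q : ℕ) (hq : z.1.val = q + 1)
    (h0 : sfun n z (q + 1) = 0) :
    ∃ z' : PrismPiece n, z'.1.val = q ∧ prismRel n z' z := by
  have hpn := z.1.isLt
  have hq1n : q + 1 ≤ n := by omega
  have hsmem : (fun i : Fin (q + 1) => sfun n z i.val) ∈ stdSimplex ℝ (Fin (q + 1)) := by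
    constructor
    · exact fun i => sfun_nonneg n z i.val
    · rw [Fin.sum_univ_eq_sum_range (sfun n z) (q + 1)]
      have h1 := sfun_sum n z
      rw [hq, sum_range_succ, h0, add_zero] at h1
      exact h1
  have htmem : (fun j : Fin (n - q + 1) => if j.val = 0 then 0 else tfun n z (j.val - 1))
      ∈ stdSimplex ℝ (Fin (n - q + 1)) := by
    constructor
    · intro j
      show 0 ≤ if j.val = 0 then (0 : ℝ) else tfun n z (j.val - 1)
      split_ifs
      · exact le_refl 0
      · exact tfun_nonneg n z _
    · rw [Fin.sum_univ_eq_sum_range (fun j => if j = 0 then (0 : ℝ) else tfun n z (j - 1))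
        (n - q + 1), Finset.sum_range_succ']
      have e1 : ∀ j ∈ range (n - q),
          (if j + 1 = 0 then (0 : ℝ) else tfun n z (j + 1 - 1)) = tfun n z j := by
        intro j _
        rw [if_neg (Nat.succ_ne_zero j)]
        rfl
      rw [Finset.sum_congr rfl e1, if_pos rfl, add_zero,
        show n - q = n - (q + 1) + 1 from by omega]
      have h1 := tfun_sum n z
      rwa [hq] at h1
  refine ⟨⟨⟨q, by omega⟩, ⟨_, hsmem⟩, ⟨_, htmem⟩⟩, rfl, hq, ?_, ?_⟩
  · intro i
    have hi : i.val < z.1.val + 1 := i.isLt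
    by_cases h2 : i.val < q + 1
    · rw [dif_pos (show i.val < q + 1 from h2)]
      show (z.2.1 : Fin (z.1.val + 1) → ℝ) i = sfun n z i.val
      unfold sfun ext
      rw [dif_pos (show i.val < z.1.val + 1 from hi)]
    · rw [dif_neg h2]
      have hqlt : q + 1 < z.1.val + 1 := by omega
      have hieq : i = ⟨q + 1, hqlt⟩ := Fin.ext (show i.val = q + 1 from by omega)
      have he : sfun n z (q + 1) = (z.2.1 : Fin (z.1.val + 1) → ℝ) ⟨q + 1, hqlt⟩ :=
        dif_pos hqlt
      rw [hieq, ← he]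
      exact h0
  · intro i
    have hi : i.val < n - q + 1 := i.isLt
    show (if i.val = 0 then (0 : ℝ) else tfun n z (i.val - 1)) = _
    by_cases h2 : i.val = 0
    · rw [if_pos h2, dif_pos (show i.val = 0 from h2)]
    · rw [if_neg h2, dif_neg (show ¬(i.val = 0) from h2)]
      exact dif_pos (show i.val - 1 < n - z.1.val + 1 from by omega)

lemma gf (hu0 : 0 < u) (hu1 : u < 1) : ∀ m (z : PrismPiece n), z.1.val = m →
    Quot.mk (prismRel n) (gS n u hu0 hu1 (fS n u hu0 hu1 z)) = Quot.mk (prismRel n) z := by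
  intro m
  induction m using Nat.strong_induction_on with
  | _ m ih =>
    intro z hm
    by_cases hz : z.1.val = 0 ∨ sfun n z z.1.val ≠ 0
    · rw [gf_eq n u hu0 hu1 z hz]
    · push_neg at hz
      obtain ⟨h1, h2⟩ := hz
      obtain ⟨z', hz'1, hz'2⟩ := step n z (z.1.val - 1) (by omega)
        (by rw [show z.1.val - 1 + 1 = z.1.val by omega]; exact h2)
      have hfeq : fS n u hu0 hu1 z' = fS n u hu0 hu1 z :=
        Subtype.ext (sigma_rel n u hz'2)
      rw [← hfeq, ih (z.1.val - 1) (by omega) z' hz'1]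
      exact Quot.sound hz'2

lemma cont_eval1 (m m2 : ℕ) (i : Fin (m + 1)) :
    Continuous fun (st : ↥(stdSimplex ℝ (Fin (m + 1))) × ↥(stdSimplex ℝ (Fin (m2 + 1)))) =>
      (st.1 : Fin (m + 1) → ℝ) i := by
  have h1 : Continuous fun (st : ↥(stdSimplex ℝ (Fin (m + 1))) ×
      ↥(stdSimplex ℝ (Fin (m2 + 1)))) => (st.1 : Fin (m + 1) → ℝ) :=
    continuous_subtype_val.comp continuous_fst
  exact (continuous_apply i).comp h1

lemma cont_eval2 (m m2 : ℕ) (j : Fin (m2 + 1)) :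
    Continuous fun (st : ↥(stdSimplex ℝ (Fin (m + 1))) × ↥(stdSimplex ℝ (Fin (m2 + 1)))) =>
      (st.2 : Fin (m2 + 1) → ℝ) j := by
  have h1 : Continuous fun (st : ↥(stdSimplex ℝ (Fin (m + 1))) ×
      ↥(stdSimplex ℝ (Fin (m2 + 1)))) => (st.2 : Fin (m2 + 1) → ℝ) :=
    continuous_subtype_val.comp continuous_snd
  exact (continuous_apply j).comp h1

lemma fS_continuous (hu0 : 0 < u) (hu1 : u < 1) : Continuous (fS n u hu0 hu1) := by
  apply continuous_sigma
  intro p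
  apply Continuous.subtype_mk
  apply continuous_pi
  intro k
  show Continuous fun (st : ↥(stdSimplex ℝ (Fin (p.val + 1))) ×
      ↥(stdSimplex ℝ (Fin (n - p.val + 1)))) =>
    sigmaRawFun n u ⟨p, st⟩ k
  unfold sigmaRawFun
  dsimp only
  have hk := k.isLt
  split_ifs with h1 h2
  · exact continuous_const.mul (cont_eval1 p.val (n - p.val) ⟨k.val, by omega⟩)
  · exact (continuous_const.mul (cont_eval1 p.val (n - p.val) ⟨k.val, by omega⟩)).add
      (continuous_const.mul (cont_eval2 p.val (n - p.val) ⟨0, by omega⟩))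
  · exact continuous_const.mul (cont_eval2 p.val (n - p.val) ⟨k.val - p.val, by omega⟩)

instance (m : ℕ) : CompactSpace ↥(stdSimplex ℝ (Fin m)) :=
  isCompact_iff_compactSpace.mp (isCompact_stdSimplex _ _)

instance : CompactSpace (PrismPiece n) :=
  inferInstanceAs (CompactSpace
    (Σ p : Fin (n + 1),
      ↥(stdSimplex ℝ (Fin (p.val + 1))) × ↥(stdSimplex ℝ (Fin (n - p.val + 1)))))

instance : CompactSpace (Quot (prismRel n)) := by
  have h : IsCompact (Set.range (Quot.mk (prismRel n))) :=
    isCompact_range continuous_quot_mk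
  rwa [Set.range_eq_univ.mpr (Quot.mk_surjective), isCompact_univ_iff] at h

noncomputable def E (hu0 : 0 < u) (hu1 : u < 1) :
    Quot (prismRel n) ≃ ↥(stdSimplex ℝ (Fin (n + 1))) where
  toFun := Quot.lift (fS n u hu0 hu1) (fun _ _ h => Subtype.ext (sigma_rel n u h))
  invFun := fun x => Quot.mk _ (gS n u hu0 hu1 x)
  left_inv := by
    apply Quot.ind
    intro z
    exact gf n u hu0 hu1 z.1.val z rfl
  right_inv := fun x => Subtype.ext (fg n u hu0 hu1 x)

end SigmaAux

/-- For `0 < u < 1`, the prismatic subdivision `σⁿ(u) : Dⁿ → Δⁿ` is a homeomorphism. -/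
theorem sigma_homeomorph (n : ℕ) (u : ℝ) (hu0 : 0 < u) (hu1 : u < 1) :
    ∃ g : Quot (prismRel n) ≃ₜ ↥(stdSimplex ℝ (Fin (n + 1))),
      ∀ z : PrismPiece n, ((g (Quot.mk _ z) : ↥(stdSimplex ℝ (Fin (n + 1)))) : Fin (n + 1) → ℝ)
        = sigmaRawFun n u z := by
  have hcont : Continuous (SigmaAux.E n u hu0 hu1) :=
    continuous_quot_lift _ (SigmaAux.fS_continuous n u hu0 hu1)
  refine ⟨Continuous.homeoOfEquivCompactToT2 hcont, fun z => ?_⟩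
  have h1 : (Continuous.homeoOfEquivCompactToT2 hcont) (Quot.mk (prismRel n) z)
      = SigmaAux.E n u hu0 hu1 (Quot.mk (prismRel n) z) := by
    rfl
  rw [h1]
  have h2 : SigmaAux.E n u hu0 hu1 (Quot.mk (prismRel n) z)
      = SigmaAux.fS n u hu0 hu1 z := rfl
  rw [h2]
  rfl
end

section
/- If X^• is the cosimplicial space with X^n = A^{×n} for a based topological space A (the cobar construction, where cofaces insert basepoints and codegeneracies project away factors), then Tot(X^•) is homeomorphic to the loop space ΩA. -/
open SimplexCategory

namespace SimplexCategory

open scoped NNReal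

/-- The topological simplex associated to `x : SimplexCategory`
(the definition removed from Mathlib, restored with its old meaning). -/
def toTopObj (x : SimplexCategory) := { f : CategoryTheory.ToType x → ℝ≥0 | ∑ i, f i = 1 }

instance (x : SimplexCategory) : CoeFun x.toTopObj fun _ => CategoryTheory.ToType x → ℝ≥0 :=
  ⟨fun f => (f : CategoryTheory.ToType x → ℝ≥0)⟩

open Classical in
/-- A morphism in `SimplexCategory` induces a map on the associated topological spaces. -/
noncomputable def toTopMap {x y : SimplexCategory} (f : x ⟶ y) (g : x.toTopObj) : y.toTopObj :=
  ⟨fun i => ∑ j ∈ Finset.univ.filter (f · = i), g j, by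
    change ∑ i, ∑ j ∈ Finset.univ.filter (f · = i), (g : CategoryTheory.ToType x → ℝ≥0) j = 1
    first
      | (rw [Finset.sum_fiberwise]; exact g.2)
      | (convert (Finset.sum_fiberwise Finset.univ (f ·)
          (fun j => (g : CategoryTheory.ToType x → ℝ≥0) j)).trans g.2)⟩

open Classical in
theorem coe_toTopMap {x y : SimplexCategory} (f : x ⟶ y) (g : x.toTopObj) (i : CategoryTheory.ToType y) :
    toTopMap f g i = ∑ j ∈ Finset.univ.filter (f · = i), g j :=
  rfl

end SimplexCategory

/-- The coface maps of the cobar construction on a based space `(A, e)`: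
`d⁰` and `d^{n+1}` insert the basepoint at the beginning/end, and `dⁱ` for
`0 < i < n+1` doubles the `i`-th coordinate. -/
def cobarD {A : Type*} (e : A) (n : ℕ) (i : Fin (n + 2)) (x : Fin n → A) :
    Fin (n + 1) → A := fun k =>
  if k.val < i.val then (if h : k.val < n then x ⟨k.val, h⟩ else e)
  else (if h : k.val - 1 < n ∧ 1 ≤ k.val then x ⟨k.val - 1, h.1⟩ else e)

/-- The codegeneracy maps of the cobar construction: `sⁱ` deletes the `(i+1)`-st
coordinate. -/
def cobarS {A : Type*} (n : ℕ) (i : Fin (n + 1)) (x : Fin (n + 1) → A) : Fin n → A :=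
  fun k => if k.val < i.val then x k.castSucc else x k.succ

/-- `Tot` of the cobar construction on `(A, e)`: consistent families of continuous maps
`aₙ : Δⁿ → Aⁿ` commuting with the coface and codegeneracy maps. -/
abbrev CobarTot (A : Type*) [TopologicalSpace A] (e : A) : Type _ :=
  {a : ∀ n : ℕ, C(toTopObj (SimplexCategory.mk n), Fin n → A) //
    (∀ (n : ℕ) (i : Fin (n + 2)) (t : toTopObj (SimplexCategory.mk n)),
      a (n + 1) (toTopMap (SimplexCategory.δ i) t) = cobarD e n i (a n t)) ∧
    (∀ (n : ℕ) (i : Fin (n + 1)) (t : toTopObj (SimplexCategory.mk (n + 1))),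
      a n (toTopMap (SimplexCategory.σ i) t) = cobarS n i (a (n + 1) t))}

open NNReal unitInterval

noncomputable section CobarAux

def cpsum {n : ℕ} (k : ℕ) (t : toTopObj (SimplexCategory.mk n)) : ℝ≥0 :=
  ∑ m ∈ Finset.univ.filter (fun m : Fin (n+1) => m.val ≤ k), t m

lemma cpsum_le_one {n : ℕ} (k : ℕ) (t : toTopObj (SimplexCategory.mk n)) : cpsum k t ≤ 1 := by
  have h : cpsum k t ≤ ∑ m : Fin (n+1), t m :=
    Finset.sum_le_sum_of_subset (Finset.filter_subset _ _)
  exact h.trans_eq t.2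

def cpsumI {n : ℕ} (k : ℕ) (t : toTopObj (SimplexCategory.mk n)) : I :=
  ⟨(cpsum k t : ℝ), (cpsum k t).2, by exact_mod_cast cpsum_le_one k t⟩

lemma cpsumI_eq {n m : ℕ} {k k' : ℕ} {t : toTopObj (SimplexCategory.mk n)}
    {t' : toTopObj (SimplexCategory.mk m)} (h : cpsum k t = cpsum k' t') :
    cpsumI k t = cpsumI k' t' := by
  apply Subtype.ext; simp [cpsumI, h]

lemma continuous_cpsumI {n : ℕ} (k : ℕ) :
    Continuous (fun t : toTopObj (SimplexCategory.mk n) => cpsumI k t) := by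
  apply Continuous.subtype_mk
  apply NNReal.continuous_coe.comp
  exact continuous_finset_sum _ fun j _ => (continuous_apply _).comp continuous_subtype_val

lemma cpsum_toTopMap {n m : ℕ} (f : SimplexCategory.mk n ⟶ SimplexCategory.mk m)
    (t : toTopObj (SimplexCategory.mk n)) (k : ℕ) :
    cpsum k (toTopMap f t) =
      ∑ j ∈ Finset.univ.filter (fun j : Fin (n+1) => (f.toOrderHom j).val ≤ k), t j := by
  classical
  calc cpsum k (toTopMap f t)
      = ∑ i ∈ Finset.univ.filter (fun i : Fin (m+1) => i.val ≤ k),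
          ∑ j ∈ Finset.univ.filter (fun j : Fin (n+1) => f.toOrderHom j = i), t j := by
        refine Finset.sum_congr rfl (fun i _ => ?_)
        rw [coe_toTopMap]
        apply Finset.sum_congr _ (fun _ _ => rfl)
        apply Finset.filter_congr; intro j _; simp; rfl
    _ = ∑ j ∈ Finset.univ.filter (fun j : Fin (n+1) => f.toOrderHom j ∈
          Finset.univ.filter (fun i : Fin (m+1) => i.val ≤ k)), t j :=
        Finset.sum_fiberwise_eq_sum_filter _ _ _ _
    _ = _ := by
        apply Finset.sum_congr _ (fun _ _ => rfl)
        apply Finset.filter_congr; intro j _; simp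

lemma succAbove_val (n : ℕ) (i : Fin (n+2)) (m : Fin (n+1)) :
    ((i.succAbove m) : ℕ) = if m.val < i.val then m.val else m.val + 1 := by
  unfold Fin.succAbove
  split_ifs with h1 h2 h3 <;>
    simp only [Fin.lt_def, Fin.coe_castSucc, Fin.val_succ] at h1 ⊢ <;> omega

lemma predAbove_val (n : ℕ) (i : Fin (n+1)) (m : Fin (n+2)) :
    ((i.predAbove m) : ℕ) = if m.val ≤ i.val then m.val else m.val - 1 := by
  unfold Fin.predAbove
  split_ifs with h1 h2 h3 <;>
    simp only [Fin.lt_def, Fin.coe_castSucc, Fin.coe_pred, Fin.coe_castLT,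
      Fin.coe_castPred] at h1 ⊢ <;> omega

lemma cpsum_delta {n : ℕ} (i : Fin (n+2)) (t : toTopObj (SimplexCategory.mk n)) (k : ℕ) :
    cpsum k (toTopMap (SimplexCategory.δ i) t) =
      ∑ j ∈ Finset.univ.filter (fun j : Fin (n+1) =>
        (if j.val < i.val then j.val else j.val + 1) ≤ k), t j := by
  classical
  rw [cpsum_toTopMap]
  refine Finset.sum_congr (Finset.filter_congr fun j _ => ?_) (fun _ _ => rfl)
  have h : (((SimplexCategory.δ i).toOrderHom j) : ℕ)
      = if j.val < i.val then j.val else j.val + 1 := succAbove_val n i j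
  rw [h]

lemma cpsum_sigma {n : ℕ} (i : Fin (n+1)) (t : toTopObj (SimplexCategory.mk (n+1))) (k : ℕ) :
    cpsum k (toTopMap (SimplexCategory.σ i) t) =
      ∑ j ∈ Finset.univ.filter (fun j : Fin (n+2) =>
        (if j.val ≤ i.val then j.val else j.val - 1) ≤ k), t j := by
  classical
  rw [cpsum_toTopMap]
  refine Finset.sum_congr (Finset.filter_congr fun j _ => ?_) (fun _ _ => rfl)
  have h : (((SimplexCategory.σ i).toOrderHom j) : ℕ)
      = if j.val ≤ i.val then j.val else j.val - 1 := predAbove_val n i j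
  rw [h]

lemma cpsum_eq_one {n : ℕ} {k : ℕ} (h : n ≤ k) (t : toTopObj (SimplexCategory.mk n)) :
    cpsum k t = 1 := by
  unfold cpsum
  rw [Finset.filter_true_of_mem (fun m _ => le_trans (Nat.le_of_lt_succ m.isLt) h)]
  exact t.2

lemma cpsumI_eq_one {n : ℕ} {k : ℕ} (h : n ≤ k) (t : toTopObj (SimplexCategory.mk n)) :
    cpsumI k t = 1 := by
  apply Subtype.ext
  show ((cpsum k t : ℝ≥0) : ℝ) = 1
  rw [cpsum_eq_one h t]; norm_num

end CobarAux

section Cpt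

def cpt (u : I) : toTopObj (SimplexCategory.mk 1) :=
  ⟨fun j : Fin 2 => if j.val = 0 then ⟨u.1, u.2.1⟩ else ⟨1 - u.1, by linarith [u.2.2]⟩, by
    show ∑ j : Fin 2, _ = 1
    apply NNReal.coe_injective
    rw [NNReal.coe_sum, Fin.sum_univ_two]
    norm_num
    show (u.1 : ℝ) + (1 - u.1) = 1
    ring⟩

lemma continuous_cpt : Continuous cpt := by
  apply Continuous.subtype_mk
  apply continuous_pi
  intro j
  by_cases h : j.val = 0 <;> simp only [h, if_true, if_false] <;>
    [exact Continuous.subtype_mk continuous_subtype_val _;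
     exact Continuous.subtype_mk (continuous_const.sub continuous_subtype_val) _]

lemma cpsum_zero_cpt (u : I) : cpsum 0 (cpt u) = ⟨u.1, u.2.1⟩ := by
  unfold cpsum
  rw [show Finset.univ.filter (fun m : Fin 2 => m.val ≤ 0) = {0} by decide]
  rw [Finset.sum_singleton]
  rfl

lemma cpsumI_zero_cpt (u : I) : cpsumI 0 (cpt u) = u := by
  apply Subtype.ext
  show ((cpsum 0 (cpt u) : ℝ≥0) : ℝ) = u.1
  rw [cpsum_zero_cpt]
  rfl

lemma cpt_cpsumI_zero {t : toTopObj (SimplexCategory.mk 1)} : cpt (cpsumI 0 t) = t := by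
  have ht : ((t (0 : Fin 2) : ℝ≥0) : ℝ) + ((t (1 : Fin 2) : ℝ≥0) : ℝ) = 1 := by
    have h2 : ∑ i : Fin 2, t i = 1 := t.2
    rw [← NNReal.coe_one, ← h2, NNReal.coe_sum, Fin.sum_univ_two]
  have hc : cpsum 0 t = t (0 : Fin 2) := by
    unfold cpsum
    rw [show Finset.univ.filter (fun m : Fin 2 => m.val ≤ 0) = {0} by decide]
    rw [Finset.sum_singleton]
  have key : ∀ j : Fin 2, (cpt (cpsumI 0 t)).1 j = t j := by
    intro j
    fin_cases j
    · apply NNReal.coe_injective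
      show ((cpsum 0 t : ℝ≥0) : ℝ) = ((t (0 : Fin 2) : ℝ≥0) : ℝ)
      rw [hc]
    · apply NNReal.coe_injective
      show 1 - ((cpsum 0 t : ℝ≥0) : ℝ) = ((t (1 : Fin 2) : ℝ≥0) : ℝ)
      rw [hc]; linarith
  exact Subtype.ext (funext key)

end Cpt

section Gmap
variable {A : Type*} [TopologicalSpace A] {e : A}

def gmap (γ : Path e e) (n : ℕ) : C(toTopObj (SimplexCategory.mk n), Fin n → A) :=
  ⟨fun t k => γ (cpsumI k.val t), by
    apply continuous_pi; intro k
    exact γ.continuous.comp (continuous_cpsumI k.val)⟩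

lemma gmap_d (γ : Path e e) (n : ℕ) (i : Fin (n+2)) (t : toTopObj (SimplexCategory.mk n)) :
    gmap γ (n+1) (toTopMap (SimplexCategory.δ i) t) = cobarD e n i (gmap γ n t) := by
  classical
  funext k
  have hk := k.isLt
  have hi := i.isLt
  show γ (cpsumI k.val (toTopMap (SimplexCategory.δ i) t)) = cobarD e n i (gmap γ n t) k
  unfold cobarD
  split_ifs with h1 h2 h3
  · -- k < i, k.val < n  : equals γ (cpsumI k.val t)
    show _ = γ (cpsumI k.val t)
    apply congrArg
    apply cpsumI_eq
    rw [cpsum_delta]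
    unfold cpsum
    refine Finset.sum_congr (Finset.filter_congr fun j _ => ?_) (fun _ _ => rfl)
    have hj := j.isLt
    split_ifs with hji <;> omega
  · -- k < i, ¬ k.val < n : k.val = n, i = n+1, sum is 1
    have hI : cpsumI k.val (toTopMap (SimplexCategory.δ i) t) = 1 := by
      apply Subtype.ext
      show ((cpsum k.val (toTopMap (SimplexCategory.δ i) t) : ℝ≥0) : ℝ) = 1
      rw [show cpsum k.val (toTopMap (SimplexCategory.δ i) t) = 1 from ?_]
      · norm_num
      · rw [cpsum_delta]
        rw [Finset.filter_true_of_mem (fun j _ => by have hj := j.isLt; split_ifs <;> omega)]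
        exact t.2
    rw [hI]
    exact γ.target
  · -- i ≤ k, k-1 < n ∧ 1 ≤ k : equals γ (cpsumI (k.val-1) t)
    show _ = γ (cpsumI (k.val - 1) t)
    apply congrArg
    apply cpsumI_eq
    rw [cpsum_delta]
    unfold cpsum
    refine Finset.sum_congr (Finset.filter_congr fun j _ => ?_) (fun _ _ => rfl)
    have hj := j.isLt
    split_ifs with hji <;> omega
  · -- i ≤ k, ¬(...) : k = 0, i = 0, sum is 0
    have hI : cpsumI k.val (toTopMap (SimplexCategory.δ i) t) = 0 := by
      apply Subtype.ext
      show ((cpsum k.val (toTopMap (SimplexCategory.δ i) t) : ℝ≥0) : ℝ) = 0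
      rw [show cpsum k.val (toTopMap (SimplexCategory.δ i) t) = 0 from ?_]
      · norm_num
      · rw [cpsum_delta]
        apply Finset.sum_eq_zero
        intro j hj
        exfalso
        simp only [Finset.mem_filter] at hj
        have := j.isLt
        rcases hj with ⟨-, hj2⟩
        split_ifs at hj2 <;> omega
    rw [hI]
    exact γ.source

lemma gmap_s (γ : Path e e) (n : ℕ) (i : Fin (n+1)) (t : toTopObj (SimplexCategory.mk (n+1))) :
    gmap γ n (toTopMap (SimplexCategory.σ i) t) = cobarS n i (gmap γ (n+1) t) := by
  classical
  funext k
  have hk := k.isLt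
  have hi := i.isLt
  show γ (cpsumI k.val (toTopMap (SimplexCategory.σ i) t)) = cobarS n i (gmap γ (n+1) t) k
  unfold cobarS
  split_ifs with h1
  · show _ = γ (cpsumI k.castSucc.val t)
    apply congrArg
    apply cpsumI_eq
    rw [cpsum_sigma]
    unfold cpsum
    refine Finset.sum_congr (Finset.filter_congr fun j _ => ?_) (fun _ _ => rfl)
    have hj := j.isLt
    have hcs : (k.castSucc : ℕ) = k.val := rfl
    simp only [eq_iff_iff, hcs]
    split_ifs with hji <;> omega
  · show _ = γ (cpsumI k.succ.val t)
    apply congrArg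
    apply cpsumI_eq
    rw [cpsum_sigma]
    unfold cpsum
    refine Finset.sum_congr (Finset.filter_congr fun j _ => ?_) (fun _ _ => rfl)
    have hj := j.isLt
    have hcs : (k.succ : ℕ) = k.val + 1 := rfl
    simp only [eq_iff_iff, hcs]
    split_ifs with hji <;> omega

end Gmap

section Main
variable {A : Type*} [TopologicalSpace A] {e : A}

def pt0 : toTopObj (SimplexCategory.mk 0) :=
  ⟨fun _ => 1, by show ∑ _i : Fin 1, (1:ℝ≥0) = 1; simp⟩

lemma cpt_zero : cpt 0 = toTopMap (SimplexCategory.δ (0 : Fin 2)) pt0 := by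
  have h : cpsumI 0 (toTopMap (SimplexCategory.δ (0 : Fin 2)) pt0) = 0 := by
    apply Subtype.ext
    show ((cpsum 0 (toTopMap (SimplexCategory.δ (0 : Fin 2)) pt0) : ℝ≥0) : ℝ) = 0
    rw [show cpsum 0 (toTopMap (SimplexCategory.δ (0 : Fin 2)) pt0) = 0 from ?_]
    · norm_num
    · rw [cpsum_delta]
      apply Finset.sum_eq_zero
      intro j hj
      exfalso
      simp only [Finset.mem_filter] at hj
      have := j.isLt
      rcases hj with ⟨-, hj2⟩
      simp only [show ((0 : Fin 2) : ℕ) = 0 from rfl] at hj2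
      split_ifs at hj2 <;> omega
  rw [← cpt_cpsumI_zero (t := toTopMap (SimplexCategory.δ (0 : Fin 2)) pt0), h]

lemma cpt_one : cpt 1 = toTopMap (SimplexCategory.δ (1 : Fin 2)) pt0 := by
  have h : cpsumI 0 (toTopMap (SimplexCategory.δ (1 : Fin 2)) pt0) = 1 := by
    apply Subtype.ext
    show ((cpsum 0 (toTopMap (SimplexCategory.δ (1 : Fin 2)) pt0) : ℝ≥0) : ℝ) = 1
    rw [show cpsum 0 (toTopMap (SimplexCategory.δ (1 : Fin 2)) pt0) = 1 from ?_]
    · norm_num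
    · rw [cpsum_delta]
      rw [Finset.filter_true_of_mem (fun j _ => by
        have := j.isLt
        simp only [show ((1 : Fin 2) : ℕ) = 1 from rfl]
        split_ifs <;> omega)]
      exact pt0.2
  rw [← cpt_cpsumI_zero (t := toTopMap (SimplexCategory.δ (1 : Fin 2)) pt0), h]

def evalZero (A : Type*) [TopologicalSpace A] : C(Fin 1 → A, A) :=
  ⟨fun x => x 0, continuous_apply 0⟩

def cptMap : C(I, toTopObj (SimplexCategory.mk 1)) := ⟨cpt, continuous_cpt⟩

def Fmap (e : A) (a : CobarTot A e) : Path e e where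
  toContinuousMap := (evalZero A).comp ((a.1 1).comp cptMap)
  source' := by
    show a.1 1 (cpt 0) 0 = e
    rw [cpt_zero, a.2.1 0 0 pt0]
    rfl
  target' := by
    show a.1 1 (cpt 1) 0 = e
    rw [cpt_one, a.2.1 0 1 pt0]
    rfl

lemma key_lemma (a : CobarTot A e) :
    ∀ (n : ℕ) (t : toTopObj (SimplexCategory.mk n)) (k : Fin n),
      a.1 n t k = a.1 1 (cpt (cpsumI k.val t)) 0 := by
  intro n
  induction n with
  | zero => intro t k; exact absurd k.isLt (by omega)
  | succ m IH =>
    intro t k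
    cases m with
    | zero =>
      have hk0 : k.val = 0 := by omega
      have hkk : k = (0 : Fin 1) := Fin.ext hk0
      rw [hkk]
      show (a.1 1) t 0 = (a.1 1) (cpt (cpsumI 0 t)) 0
      rw [cpt_cpsumI_zero]
    | succ p =>
      by_cases hk : k.val < p + 1
      · set k' : Fin (p+1) := ⟨k.val, hk⟩ with hk'
        have h := congrFun (a.2.2 (p+1) (Fin.last (p+1)) t) k'
        unfold cobarS at h
        rw [if_pos (show k'.val < (Fin.last (p+1)).val from hk)] at h
        rw [show k'.castSucc = k from Fin.ext rfl, IH] at h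
        have hps : cpsumI k'.val (toTopMap (SimplexCategory.σ (Fin.last (p+1))) t)
            = cpsumI k.val t := by
          apply cpsumI_eq
          rw [cpsum_sigma]
          unfold cpsum
          refine Finset.sum_congr (Finset.filter_congr fun j _ => ?_) (fun _ _ => rfl)
          have hj := j.isLt
          have hlast : ((Fin.last (p+1)) : ℕ) = p + 1 := rfl
          have hkv : k'.val = k.val := rfl
          rw [hlast, hkv]
          split_ifs with hji <;> omega
        rw [hps] at h
        exact h.symm
      · have hk1 : k.val = p + 1 := by have := k.isLt; omega
        have hp : p < p + 1 := by omega
        set k' : Fin (p+1) := ⟨p, hp⟩ with hk'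
        have h := congrFun (a.2.2 (p+1) 0 t) k'
        unfold cobarS at h
        rw [if_neg (show ¬ (k'.val < (0 : Fin (p+2)).val) from Nat.not_lt_zero _)] at h
        have hc : k'.succ = k := Fin.ext (by
          have h1 : k'.succ.val = k'.val + 1 := rfl
          have h2 : k'.val = p := rfl
          rw [h1, h2, hk1])
        rw [hc, IH] at h
        have hps : cpsumI k'.val (toTopMap (SimplexCategory.σ 0) t)
            = cpsumI k.val t := by
          apply cpsumI_eq
          rw [cpsum_sigma]
          unfold cpsum
          refine Finset.sum_congr (Finset.filter_congr fun j _ => ?_) (fun _ _ => rfl)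
          have hj := j.isLt
          have h0 : ((0 : Fin (p+2)) : ℕ) = 0 := rfl
          have hkv : k'.val = p := rfl
          rw [h0, hkv, hk1]
          split_ifs with hji <;> omega
        rw [hps] at h
        exact h.symm

end Main


/-- `Tot` of the cobar construction on a based space `A` is homeomorphic to the loop
space `ΩA`. -/
theorem cobarTot_homeomorph_loopSpace (A : Type*) [TopologicalSpace A] (e : A) :
    Nonempty (CobarTot A e ≃ₜ Path e e) := by
  refine ⟨{
    toFun := Fmap e
    invFun := fun γ => ⟨fun n => gmap γ n,
      ⟨fun n i t => gmap_d γ n i t, fun n i t => gmap_s γ n i t⟩⟩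
    left_inv := by
      intro a
      apply Subtype.ext
      funext n
      apply ContinuousMap.ext
      intro t
      funext k
      exact (key_lemma a n t k).symm
    right_inv := by
      intro γ
      ext u
      show γ (cpsumI (0:ℕ) (cpt u)) = γ u
      rw [cpsumI_zero_cpt]
    continuous_toFun := by
      apply continuous_induced_rng.2
      show Continuous fun a : CobarTot A e => (evalZero A).comp ((a.1 1).comp cptMap)
      exact (ContinuousMap.continuous_postcomp (evalZero A)).comp
        ((ContinuousMap.continuous_precomp cptMap).comp
          ((continuous_apply 1).comp continuous_subtype_val))
    continuous_invFun := by
      apply Continuous.subtype_mk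
      apply continuous_pi
      intro n
      apply ContinuousMap.continuous_of_continuous_uncurry
      show Continuous fun p : Path e e × toTopObj (SimplexCategory.mk n) =>
        (fun k : Fin n => p.1 (cpsumI k.val p.2))
      apply continuous_pi
      intro k
      exact continuous_fst.eval ((continuous_cpsumI k.val).comp continuous_snd)
  }⟩
end

section
/- In a filtered chain complex X of abelian groups whose filtration is homological (the homology of F_iX/F_{i-1}X is concentrated in degree i), the condensation X̄ with X̄_i = H_i(F_iX/F_{i-1}X) and boundary operator given by the triple (F_iX, F_{i-1}X, F_{i-2}X) is a chain complex, i.e., the composite of two consecutive boundary operators is zero. -/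
section

variable (X : ℕ → Type*) [∀ n, AddCommGroup (X n)]
variable (d : ∀ n, X (n + 1) →+ X n) (F : ℕ → ∀ n, AddSubgroup (X n))

/-- `F_{i-1}`, with the convention `F_{-1} = 0`. -/
def Fprev : ℕ → ∀ n, AddSubgroup (X n)
  | 0 => fun _ => ⊥
  | (i + 1) => F i

/-- The relative cycles: `Z_i = {x ∈ F_i X_i : dx ∈ F_{i-1} X_{i-1}}`. -/
def relZ : ∀ i, AddSubgroup (X i)
  | 0 => F 0 0
  | (i + 1) => F (i + 1) (i + 1) ⊓ AddSubgroup.comap (d i) (F i i)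

/-- The relative boundaries: `B_i = d(F_i X_{i+1}) + F_{i-1} X_i`. -/
def relB (i : ℕ) : AddSubgroup (X i) :=
  AddSubgroup.map (d i) (F i (i + 1)) ⊔ (Fprev X F i i)

/-- The degree-`i` group `X̄_i = H_i(F_iX/F_{i-1}X)` of the condensation. -/
abbrev condObj (i : ℕ) : Type _ :=
  (relZ X d F i) ⧸ ((relB X d F i).addSubgroupOf (relZ X d F i))

/-- If `d ∘ d = 0`, the differential carries relative cycles to relative cycles. -/
theorem dZmem (hdd : ∀ n (x : X (n + 2)), d n (d (n + 1) x) = 0) {i : ℕ}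
    (x : X (i + 1)) (hx : x ∈ relZ X d F (i + 1)) : d i x ∈ relZ X d F i := by
  rcases (AddSubgroup.mem_inf.mp hx) with ⟨h1, h2⟩
  cases i with
  | zero => exact h2
  | succ j =>
    refine AddSubgroup.mem_inf.mpr ⟨h2, ?_⟩
    simp only [AddSubgroup.mem_comap, hdd]
    exact zero_mem _

end

/-- In a homologically filtered chain complex (the homology of `F_iX/F_{i-1}X` is
concentrated in dimension `i`), the condensation `X̄` with `X̄_i = H_i(F_iX/F_{i-1}X)`
and boundary operator induced by `d` (the connecting map of the triple
`(F_iX, F_{i-1}X, F_{i-2}X)`) is a chain complex: the boundary is well defined on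
homology classes and the composite of two consecutive boundary operators is zero. -/
theorem condensation_is_chain_complex
    (X : ℕ → Type*) [∀ n, AddCommGroup (X n)]
    (d : ∀ n, X (n + 1) →+ X n)
    (hdd : ∀ n (x : X (n + 2)), d n (d (n + 1) x) = 0)
    (F : ℕ → ∀ n, AddSubgroup (X n))
    (hmono : ∀ i n, F i n ≤ F (i + 1) n)
    (hexh : ∀ n (x : X n), ∃ i, x ∈ F i n)
    (hcompat : ∀ i n (x : X (n + 1)), x ∈ F i (n + 1) → d n x ∈ F i n)
    -- homological filtration: `H_j(F_iX/F_{i-1}X) = 0` for `j ≠ i`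
    (hfilt0 : ∀ i, i ≠ 0 → ∀ x : X 0, x ∈ F i 0 →
      ∃ y ∈ F i 1, ∃ z ∈ Fprev X F i 0, x = d 0 y + z)
    (hfilt : ∀ i j, j + 1 ≠ i → ∀ x : X (j + 1), x ∈ F i (j + 1) →
      d j x ∈ Fprev X F i j →
      ∃ y ∈ F i (j + 2), ∃ z ∈ Fprev X F i (j + 1), x = d (j + 1) y + z) :
    ∃ bd : ∀ i, condObj X d F (i + 1) →+ condObj X d F i,
      (∀ (i : ℕ) (x : relZ X d F (i + 1)),
        bd i (QuotientAddGroup.mk x)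
          = QuotientAddGroup.mk ⟨d i x.1, dZmem X d F hdd x.1 x.2⟩) ∧
      (∀ i, (bd i).comp (bd (i + 1)) = 0) := by
  have hker : ∀ i, ∀ x ∈ (relB X d F (i + 1)).addSubgroupOf (relZ X d F (i + 1)),
      ((QuotientAddGroup.mk' ((relB X d F i).addSubgroupOf (relZ X d F i))).comp
        ({ toFun := fun x : relZ X d F (i + 1) =>
              (⟨d i x.1, dZmem X d F hdd x.1 x.2⟩ : relZ X d F i),
           map_zero' := by ext; simp,
           map_add' := fun a b => by ext; simp } :
           relZ X d F (i + 1) →+ relZ X d F i)) x = 0 := by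
    intro i x hx
    rw [AddSubgroup.mem_addSubgroupOf] at hx
    rcases AddSubgroup.mem_sup.mp hx with ⟨a, ha, b, hb, hab⟩
    rcases ha with ⟨y, hy, rfl⟩
    simp only [AddMonoidHom.comp_apply, AddMonoidHom.coe_mk, ZeroHom.coe_mk]
    rw [QuotientAddGroup.mk'_apply, QuotientAddGroup.eq_zero_iff, AddSubgroup.mem_addSubgroupOf]
    have : d i x.1 = d i b := by
      rw [← hab, map_add, hdd, zero_add]
    show (d i) x.1 ∈ relB X d F i
    rw [this]
    have hb' : b ∈ F i (i + 1) := hb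
    exact AddSubgroup.mem_sup_left ⟨b, hb', rfl⟩
  refine ⟨fun i => QuotientAddGroup.lift _ _ (by intro x hx; exact AddMonoidHom.mem_ker.mpr (hker i x hx)), fun i x => rfl, fun i => ?_⟩
  ext x
  · simp only [AddMonoidHom.comp_apply, AddMonoidHom.zero_apply]
    simp only [AddMonoidHom.comp_apply, QuotientAddGroup.mk'_apply, QuotientAddGroup.lift_mk,
      AddMonoidHom.coe_mk, ZeroHom.coe_mk]
    have : (⟨d i (d (i + 1) x.1), dZmem X d F hdd _ (dZmem X d F hdd x.1 x.2)⟩ :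
        relZ X d F i) = 0 := Subtype.ext (hdd i x.1)
    rw [this]
    simp
end

section
/- The homology of the condensation of a homologically filtered chain complex is naturally isomorphic to the homology of the original complex: H_*(X̄) ≅ H_*(X). -/
/-- The homology of a non-negatively graded chain complex `(G, δ)`:
`H_0 = G_0 / im δ_0` and `H_{i+1} = ker δ_i / im δ_{i+1}`. -/
def homologyObj (G : ℕ → Type*) [∀ n, AddCommGroup (G n)]
    (δ : ∀ n, G (n + 1) →+ G n) : ∀ _ : ℕ, Type _
  | 0 => G 0 ⧸ (δ 0).range
  | (i + 1) => (δ i).ker ⧸ ((δ (i + 1)).range.addSubgroupOf (δ i).ker)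

noncomputable instance homologyObjAddCommGroup (G : ℕ → Type*) [∀ n, AddCommGroup (G n)]
    (δ : ∀ n, G (n + 1) →+ G n) : ∀ i, AddCommGroup (homologyObj G δ i)
  | 0 => inferInstanceAs (AddCommGroup (G 0 ⧸ (δ 0).range))
  | (i + 1) =>
    inferInstanceAs (AddCommGroup ((δ i).ker ⧸ ((δ (i + 1)).range.addSubgroupOf (δ i).ker)))

/-!
Both homologies are identified with `K_n / (K_n ∩ d X_{n+1})`, where `K_n = F_n X_n ∩ ker d`.
Every class of `H_n(X)` has a representative in `K_n`, because the acyclicity of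
`F_k X / F_{k-1} X` in degree `n ≠ k` lets one push a cycle down the filtration until `k = n`.
Every class of `H_n(X̄)` is represented by a relative cycle `z ∈ F_n X_n` with
`dz ∈ F_{n-1}`, and `dz` becomes a genuine boundary inside `F_{n-1}` by the same acyclicity, so
`z` can be corrected to an element of `K_n`. The same two arguments show that an element of `K_n`
is a boundary in `X` exactly when its class is a boundary in `X̄`.
-/

theorem QuotientAddGroup.mk_addSubgroupOf_eq_zero_iff {G : Type*} [AddCommGroup G]
    {H N : AddSubgroup G} (x : H) : (x : H ⧸ N.addSubgroupOf H) = 0 ↔ (x : G) ∈ N := by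
  rw [QuotientAddGroup.eq_zero_iff, AddSubgroup.mem_addSubgroupOf]

theorem QuotientAddGroup.mk_addSubgroupOf_eq_iff {G : Type*} [AddCommGroup G]
    {H N : AddSubgroup G} (x y : H) :
    (x : H ⧸ N.addSubgroupOf H) = y ↔ (x - y : G) ∈ N := by
  rw [← sub_eq_zero, ← QuotientAddGroup.mk_sub, mk_addSubgroupOf_eq_zero_iff,
    AddSubgroup.coe_sub]

theorem AddMonoidHom.nonempty_addEquiv_of_surjective_of_ker_eq {K A B : Type*}
    [AddGroup K] [AddGroup A] [AddGroup B] (φ : K →+ A) (ψ : K →+ B)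
    (hφ : Function.Surjective φ) (hψ : Function.Surjective ψ) (h : φ.ker = ψ.ker) :
    Nonempty (A ≃+ B) :=
  ⟨((QuotientAddGroup.quotientKerEquivOfSurjective φ hφ).symm.trans
    (QuotientAddGroup.quotientAddEquivOfEq h)).trans
    (QuotientAddGroup.quotientKerEquivOfSurjective ψ hψ)⟩

namespace FilteredComplex

variable {X : ℕ → Type*} [∀ n, AddCommGroup (X n)]
variable {d : ∀ n, X (n + 1) →+ X n} {F : ℕ → ∀ n, AddSubgroup (X n)}

theorem mem_relB_iff {i : ℕ} {x : X i} : x ∈ relB X d F i ↔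
    ∃ u ∈ F i (i + 1), ∃ z ∈ Fprev X F i i, d i u + z = x := by
  simp only [relB, AddSubgroup.mem_sup, AddSubgroup.mem_map]
  constructor
  · rintro ⟨_, ⟨u, hu, rfl⟩, z, hz, rfl⟩
    exact ⟨u, hu, z, hz, rfl⟩
  · rintro ⟨u, hu, z, hz, rfl⟩
    exact ⟨d i u, ⟨u, hu, rfl⟩, z, hz, rfl⟩

theorem relB_zero_le_range : relB X d F 0 ≤ (d 0).range :=
  sup_le (AddSubgroup.map_le_range _ _) bot_le

theorem relZ_le_F : ∀ n, relZ X d F n ≤ F n n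
  | 0 => le_rfl
  | _ + 1 => inf_le_left

theorem mem_relZ_succ_iff {i : ℕ} {x : X (i + 1)} :
    x ∈ relZ X d F (i + 1) ↔ x ∈ F (i + 1) (i + 1) ∧ d i x ∈ F i i :=
  AddSubgroup.mem_inf

variable (hdd : ∀ n (x : X (n + 2)), d n (d (n + 1) x) = 0)
variable (hmono : ∀ i n, F i n ≤ F (i + 1) n)
variable (hexh : ∀ n (x : X n), ∃ i, x ∈ F i n)
variable (hfilt0 : ∀ i, i ≠ 0 → ∀ x : X 0, x ∈ F i 0 →
      ∃ y ∈ F i 1, ∃ z ∈ Fprev X F i 0, x = d 0 y + z)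
variable (hfilt : ∀ i j, j + 1 ≠ i → ∀ x : X (j + 1), x ∈ F i (j + 1) →
      d j x ∈ Fprev X F i j →
      ∃ y ∈ F i (j + 2), ∃ z ∈ Fprev X F i (j + 1), x = d (j + 1) y + z)

include hmono in
theorem F_mono {k i : ℕ} (h : k ≤ i) (n : ℕ) : F k n ≤ F i n :=
  monotone_nat_of_le_succ (f := fun i => F i n) (fun i => hmono i n) h

include hdd hmono hfilt in
/-- Iterates the vanishing of `H_{j+1}(F_m X / F_{m-1} X)` for `m ≤ j` down the filtration. -/
theorem exists_mem_F_d_eq_of_cycle {m j : ℕ} (hm : m ≤ j) {b : X (j + 1)}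
    (hb : b ∈ F m (j + 1)) (hdb : d j b = 0) : ∃ y ∈ F m (j + 2), d (j + 1) y = b := by
  induction m generalizing b with
  | zero =>
    obtain ⟨y, hy, z, hz, rfl⟩ := hfilt 0 j (by omega) b hb (by simp [Fprev, hdb])
    obtain rfl : z = 0 := AddSubgroup.mem_bot.mp hz
    exact ⟨y, hy, (add_zero _).symm⟩
  | succ m ih =>
    obtain ⟨y, hy, z, hz, rfl⟩ :=
      hfilt (m + 1) j (by omega) b hb (by rw [hdb]; exact zero_mem _)
    have hdz : d j z = 0 := by rwa [map_add, hdd, zero_add] at hdb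
    obtain ⟨y', hy', rfl⟩ := ih (by omega) hz hdz
    exact ⟨y + y', add_mem hy (hmono m _ hy'), map_add _ _ _⟩

include hdd hmono hexh hfilt in
/-- While `x ∈ F_k` with `k > j + 1`, the vanishing of `H_{j+1}(F_k X / F_{k-1} X)` pushes `x`
down to `F_{k-1}` modulo a boundary. -/
theorem exists_sub_d_mem_F_self {j : ℕ} (x : X (j + 1)) (hx : d j x ∈ F j j) :
    ∃ y, x - d (j + 1) y ∈ F (j + 1) (j + 1) := by
  obtain ⟨k, hk⟩ := hexh _ x
  induction k generalizing x with
  | zero => exact ⟨0, by simpa using F_mono hmono (Nat.zero_le _) _ hk⟩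
  | succ m ih =>
    by_cases hle : m + 1 ≤ j + 1
    · exact ⟨0, by simpa using F_mono hmono hle _ hk⟩
    obtain ⟨y, hy, z, hz, rfl⟩ :=
      hfilt (m + 1) j (by omega) x hk (F_mono hmono (by omega) _ hx)
    rw [map_add, hdd, zero_add] at hx
    obtain ⟨y', hy'⟩ := ih z hx hz
    exact ⟨y + y', by rwa [map_add, add_sub_add_left_eq_sub]⟩

include hfilt0 hexh in
theorem exists_sub_d_mem_F_zero (x : X 0) : ∃ y, x - d 0 y ∈ F 0 0 := by
  obtain ⟨k, hk⟩ := hexh _ x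
  induction k generalizing x with
  | zero => exact ⟨0, by simpa using hk⟩
  | succ m ih =>
    obtain ⟨y, -, z, hz, rfl⟩ := hfilt0 (m + 1) (by omega) x hk
    obtain ⟨y', hy'⟩ := ih z hz
    exact ⟨y + y', by rwa [map_add, add_sub_add_left_eq_sub]⟩

include hdd hmono hexh hfilt in
theorem exists_mem_relZ_d_eq {n : ℕ} (w : X (n + 1)) (hw : d n w ∈ F n n) :
    ∃ w' ∈ relZ X d F (n + 1), d n w' = d n w := by
  obtain ⟨y, hy⟩ := exists_sub_d_mem_F_self hdd hmono hexh hfilt w hw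
  have hdw : d n (w - d (n + 1) y) = d n w := by rw [map_sub, hdd, sub_zero]
  exact ⟨_, mem_relZ_succ_iff.mpr ⟨hy, hdw ▸ hw⟩, hdw⟩

include hdd hmono hfilt in
theorem exists_mem_F_d_eq_of_d_mem_Fprev {j : ℕ} (x : X (j + 1))
    (hx : d j x ∈ Fprev X F j j) : ∃ y ∈ F j (j + 1), d j y = d j x := by
  cases j with
  | zero => exact ⟨0, zero_mem _, by rw [map_zero, AddSubgroup.mem_bot.mp hx]⟩
  | succ m =>
    obtain ⟨y, hy, hdy⟩ := exists_mem_F_d_eq_of_cycle hdd hmono hfilt le_rfl hx (hdd m x)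
    exact ⟨y, hmono m _ hy, hdy⟩

include hdd hmono hfilt in
theorem mem_range_of_mem_relB_of_cycle {j : ℕ} {x : X (j + 1)}
    (hx : x ∈ relB X d F (j + 1)) (hdx : d j x = 0) : x ∈ (d (j + 1)).range := by
  obtain ⟨u, -, b, hb, rfl⟩ := mem_relB_iff.mp hx
  rw [map_add, hdd, zero_add] at hdx
  obtain ⟨y, -, rfl⟩ := exists_mem_F_d_eq_of_cycle hdd hmono hfilt le_rfl hb hdx
  exact ⟨u + y, map_add _ _ _⟩

include hdd hmono hfilt in
theorem exists_cycle_sub_mem_relB {j : ℕ} {z : X (j + 1)} (hz : z ∈ relZ X d F (j + 1))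
    (hdz : d j z ∈ relB X d F j) :
    ∃ c ∈ F (j + 1) (j + 1), d j c = 0 ∧ z - c ∈ relB X d F (j + 1) := by
  obtain ⟨u, hu, b, hb, hub⟩ := mem_relB_iff.mp hdz
  have hdzu : d j (z - u) = b := by rw [map_sub, ← hub, add_sub_cancel_left]
  obtain ⟨y, hy, hdy⟩ := exists_mem_F_d_eq_of_d_mem_Fprev hdd hmono hfilt (z - u)
    (hdzu ▸ hb)
  refine ⟨z - u - y, sub_mem (sub_mem (mem_relZ_succ_iff.mp hz).1 (hmono j _ hu))
    (hmono j _ hy), by rw [map_sub, hdy, sub_self], ?_⟩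
  exact mem_relB_iff.mpr ⟨0, zero_mem _, u + y, add_mem hu hy, by rw [map_zero]; abel⟩

variable (bd : ∀ i, condObj X d F (i + 1) →+ condObj X d F i)
variable (hbd : ∀ (i : ℕ) (x : relZ X d F (i + 1)),
      bd i (QuotientAddGroup.mk x)
        = QuotientAddGroup.mk ⟨d i x.1, dZmem X d F hdd x.1 x.2⟩)

include hbd in
theorem bd_mk_eq_zero_iff {n : ℕ} (z : relZ X d F (n + 1)) :
    bd n (QuotientAddGroup.mk z) = 0 ↔ d n z ∈ relB X d F n := by
  rw [hbd, QuotientAddGroup.mk_addSubgroupOf_eq_zero_iff]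

include hbd in
theorem mk_mem_range_bd_iff {n : ℕ} (x : relZ X d F n) :
    (QuotientAddGroup.mk x : condObj X d F n) ∈ (bd n).range ↔
      ∃ w ∈ relZ X d F (n + 1), (x : X n) - d n w ∈ relB X d F n := by
  constructor
  · rintro ⟨ξ, hξ⟩
    obtain ⟨w, rfl⟩ := QuotientAddGroup.mk_surjective ξ
    rw [hbd, eq_comm, QuotientAddGroup.mk_addSubgroupOf_eq_iff] at hξ
    exact ⟨w, w.2, hξ⟩
  · rintro ⟨w, hw, hxw⟩
    refine ⟨QuotientAddGroup.mk ⟨w, hw⟩, ?_⟩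
    rw [hbd, eq_comm, QuotientAddGroup.mk_addSubgroupOf_eq_iff]
    exact hxw

include hmono hexh hfilt hbd in
theorem mk_mem_range_bd_of_mem_range_d {n : ℕ} (x : relZ X d F n)
    (hx : (x : X n) ∈ (d n).range) :
    (QuotientAddGroup.mk x : condObj X d F n) ∈ (bd n).range := by
  obtain ⟨w, hw⟩ := hx
  obtain ⟨w', hw', hdw'⟩ :=
    exists_mem_relZ_d_eq hdd hmono hexh hfilt w (hw ▸ relZ_le_F n x.2)
  refine (mk_mem_range_bd_iff hdd bd hbd x).mpr ⟨w', hw', ?_⟩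
  rw [hdw', hw, sub_self]
  exact zero_mem _

include hmono hexh hfilt hbd in
theorem mk_mem_range_bd_zero_iff (x : relZ X d F 0) :
    (QuotientAddGroup.mk x : condObj X d F 0) ∈ (bd 0).range ↔ (x : X 0) ∈ (d 0).range := by
  refine ⟨fun hx => ?_, mk_mem_range_bd_of_mem_range_d hdd hmono hexh hfilt bd hbd x⟩
  obtain ⟨w, -, hw⟩ := (mk_mem_range_bd_iff hdd bd hbd x).mp hx
  simpa using add_mem (relB_zero_le_range hw) (AddMonoidHom.mem_range.mpr ⟨w, rfl⟩)

include hmono hexh hfilt hbd in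
theorem mk_mem_range_bd_succ_iff {j : ℕ} (x : relZ X d F (j + 1)) (hdx : d j x = 0) :
    (QuotientAddGroup.mk x : condObj X d F (j + 1)) ∈ (bd (j + 1)).range ↔
      (x : X (j + 1)) ∈ (d (j + 1)).range := by
  refine ⟨fun hx => ?_, mk_mem_range_bd_of_mem_range_d hdd hmono hexh hfilt bd hbd x⟩
  obtain ⟨w, -, hw⟩ := (mk_mem_range_bd_iff hdd bd hbd x).mp hx
  have hbound := mem_range_of_mem_relB_of_cycle hdd hmono hfilt hw
    (by rw [map_sub, hdd, sub_zero, hdx])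
  simpa using add_mem hbound (AddMonoidHom.mem_range.mpr ⟨w, rfl⟩)

include hmono hexh hfilt0 hfilt hbd in
theorem nonempty_condHomology_zero_addEquiv :
    Nonempty (condObj X d F 0 ⧸ (bd 0).range ≃+ X 0 ⧸ (d 0).range) := by
  refine AddMonoidHom.nonempty_addEquiv_of_surjective_of_ker_eq
    ((QuotientAddGroup.mk' (bd 0).range).comp (QuotientAddGroup.mk' _))
    ((QuotientAddGroup.mk' (d 0).range).comp (relZ X d F 0).subtype)
    ((QuotientAddGroup.mk'_surjective _).comp (QuotientAddGroup.mk'_surjective _)) ?_ ?_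
  · intro q
    obtain ⟨x, rfl⟩ := QuotientAddGroup.mk_surjective q
    obtain ⟨y, hy⟩ := exists_sub_d_mem_F_zero hexh hfilt0 x
    refine ⟨⟨x - d 0 y, hy⟩, ?_⟩
    change ((x - d 0 y : X 0) : X 0 ⧸ (d 0).range) = x
    rw [QuotientAddGroup.mk_sub,
      (QuotientAddGroup.eq_zero_iff (d 0 y)).mpr (AddMonoidHom.mem_range.mpr ⟨y, rfl⟩), sub_zero]
  · ext x
    simp only [AddMonoidHom.mem_ker, AddMonoidHom.comp_apply, QuotientAddGroup.mk'_apply,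
      QuotientAddGroup.eq_zero_iff, AddSubgroup.coe_subtype]
    exact mk_mem_range_bd_zero_iff hdd hmono hexh hfilt bd hbd x

include hmono hexh hfilt hbd in
theorem nonempty_condHomology_succ_addEquiv (j : ℕ) :
    Nonempty ((bd j).ker ⧸ (bd (j + 1)).range.addSubgroupOf (bd j).ker ≃+
      (d j).ker ⧸ (d (j + 1)).range.addSubgroupOf (d j).ker) := by
  let K : AddSubgroup (X (j + 1)) := F (j + 1) (j + 1) ⊓ (d j).ker
  have hKZ : K ≤ relZ X d F (j + 1) := fun x hx =>
    mem_relZ_succ_iff.mpr ⟨hx.1, by rw [AddMonoidHom.mem_ker.mp hx.2]; exact zero_mem _⟩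
  let toCond : K →+ condObj X d F (j + 1) :=
    (QuotientAddGroup.mk' _).comp (AddSubgroup.inclusion hKZ)
  have hcycle (x : K) : toCond x ∈ (bd j).ker :=
    (bd_mk_eq_zero_iff hdd bd hbd _).mpr
      (by rw [AddSubgroup.coe_inclusion, AddMonoidHom.mem_ker.mp x.2.2]; exact zero_mem _)
  refine AddMonoidHom.nonempty_addEquiv_of_surjective_of_ker_eq
    ((QuotientAddGroup.mk' _).comp (toCond.codRestrict _ hcycle))
    ((QuotientAddGroup.mk' _).comp (AddSubgroup.inclusion inf_le_right)) ?_ ?_ ?_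
  · intro q
    obtain ⟨⟨ξ, hξ⟩, rfl⟩ := QuotientAddGroup.mk_surjective q
    obtain ⟨z, rfl⟩ := QuotientAddGroup.mk_surjective ξ
    obtain ⟨c, hc, hdc, hzc⟩ :=
      exists_cycle_sub_mem_relB hdd hmono hfilt z.2 ((bd_mk_eq_zero_iff hdd bd hbd z).mp hξ)
    refine ⟨⟨c, hc, hdc⟩, congrArg (QuotientAddGroup.mk' _) (Subtype.ext ?_)⟩
    exact (QuotientAddGroup.mk_addSubgroupOf_eq_iff _ _).mpr (by simpa using neg_mem hzc)
  · intro q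
    obtain ⟨⟨c, hc⟩, rfl⟩ := QuotientAddGroup.mk_surjective q
    have hdc := AddMonoidHom.mem_ker.mp hc
    obtain ⟨y, hy⟩ :=
      exists_sub_d_mem_F_self hdd hmono hexh hfilt c (by rw [hdc]; exact zero_mem _)
    refine ⟨⟨c - d (j + 1) y, hy,
      AddMonoidHom.mem_ker.mpr (by rw [map_sub, hdd, hdc, sub_zero])⟩, ?_⟩
    exact (QuotientAddGroup.mk_addSubgroupOf_eq_iff _ _).mpr (by simp)
  · ext x
    simp only [AddMonoidHom.mem_ker, AddMonoidHom.comp_apply, QuotientAddGroup.mk'_apply,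
      QuotientAddGroup.mk_addSubgroupOf_eq_zero_iff, AddMonoidHom.codRestrict_apply,
      toCond, AddSubgroup.coe_inclusion]
    exact mk_mem_range_bd_succ_iff hdd hmono hexh hfilt bd hbd (AddSubgroup.inclusion hKZ x)
      (AddMonoidHom.mem_ker.mp x.2.2)

end FilteredComplex

theorem condensation_homology_iso_general
    (X : ℕ → Type*) [∀ n, AddCommGroup (X n)]
    (d : ∀ n, X (n + 1) →+ X n)
    (hdd : ∀ n (x : X (n + 2)), d n (d (n + 1) x) = 0)
    (F : ℕ → ∀ n, AddSubgroup (X n))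
    (hmono : ∀ i n, F i n ≤ F (i + 1) n)
    (hexh : ∀ n (x : X n), ∃ i, x ∈ F i n)
    -- homological filtration: `H_j(F_iX/F_{i-1}X) = 0` for `j ≠ i`
    (hfilt0 : ∀ i, i ≠ 0 → ∀ x : X 0, x ∈ F i 0 →
      ∃ y ∈ F i 1, ∃ z ∈ Fprev X F i 0, x = d 0 y + z)
    (hfilt : ∀ i j, j + 1 ≠ i → ∀ x : X (j + 1), x ∈ F i (j + 1) →
      d j x ∈ Fprev X F i j →
      ∃ y ∈ F i (j + 2), ∃ z ∈ Fprev X F i (j + 1), x = d (j + 1) y + z)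
    -- `bd` is the boundary operator of the condensation, induced by `d`
    (bd : ∀ i, condObj X d F (i + 1) →+ condObj X d F i)
    (hbd : ∀ (i : ℕ) (x : relZ X d F (i + 1)),
      bd i (QuotientAddGroup.mk x)
        = QuotientAddGroup.mk ⟨d i x.1, dZmem X d F hdd x.1 x.2⟩) :
    ∀ i, Nonempty (homologyObj (condObj X d F) bd i ≃+ homologyObj X d i) := by
  rintro (_ | j)
  · exact FilteredComplex.nonempty_condHomology_zero_addEquiv hdd hmono hexh hfilt0 hfilt bd hbd
  · exact FilteredComplex.nonempty_condHomology_succ_addEquiv hdd hmono hexh hfilt bd hbd j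

/-- The homology of the condensation of a homologically filtered chain complex is
(naturally) isomorphic to the homology of the original complex: `H_*(X̄) ≅ H_*(X)`. -/
theorem condensation_homology_iso
    (X : ℕ → Type*) [∀ n, AddCommGroup (X n)]
    (d : ∀ n, X (n + 1) →+ X n)
    (hdd : ∀ n (x : X (n + 2)), d n (d (n + 1) x) = 0)
    (F : ℕ → ∀ n, AddSubgroup (X n))
    (hmono : ∀ i n, F i n ≤ F (i + 1) n)
    (hexh : ∀ n (x : X n), ∃ i, x ∈ F i n)
    (hcompat : ∀ i n (x : X (n + 1)), x ∈ F i (n + 1) → d n x ∈ F i n)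
    -- homological filtration: `H_j(F_iX/F_{i-1}X) = 0` for `j ≠ i`
    (hfilt0 : ∀ i, i ≠ 0 → ∀ x : X 0, x ∈ F i 0 →
      ∃ y ∈ F i 1, ∃ z ∈ Fprev X F i 0, x = d 0 y + z)
    (hfilt : ∀ i j, j + 1 ≠ i → ∀ x : X (j + 1), x ∈ F i (j + 1) →
      d j x ∈ Fprev X F i j →
      ∃ y ∈ F i (j + 2), ∃ z ∈ Fprev X F i (j + 1), x = d (j + 1) y + z)
    -- `bd` is the boundary operator of the condensation, induced by `d`
    (bd : ∀ i, condObj X d F (i + 1) →+ condObj X d F i)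
    (hbd : ∀ (i : ℕ) (x : relZ X d F (i + 1)),
      bd i (QuotientAddGroup.mk x)
        = QuotientAddGroup.mk ⟨d i x.1, dZmem X d F hdd x.1 x.2⟩) :
    ∀ i, Nonempty (homologyObj (condObj X d F) bd i ≃+ homologyObj X d i) :=
  condensation_homology_iso_general X d hdd F hmono hexh hfilt0 hfilt bd hbd
end

section
/- The relation on T_n (pairs (t,p) of a total order t and a partial order p on {1,…,n} with p ⊆ t and the betweenness condition) defined by (t_1,p_1) ≤ (t_2,p_2) iff p_1 ⊆ p_2 and t_2 ∩ t_1^{op} ⊆ p_2 is a partial order. -/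
/-- An element of `T_n`: a pair `(t, p)` of a (strict) total order `t` and a (strict)
partial order `p` on `{1,…,n}` such that `p ⊆ t` and whenever `i < j < k` in `t` and
`i < k` in `p`, then `i < j` in `p`. -/
structure TPair (n : ℕ) where
  t : Fin n → Fin n → Prop
  p : Fin n → Fin n → Prop
  t_irrefl : ∀ i, ¬ t i i
  t_trans : ∀ i j k, t i j → t j k → t i k
  t_total : ∀ i j, i ≠ j → t i j ∨ t j i
  p_irrefl : ∀ i, ¬ p i i
  p_trans : ∀ i j k, p i j → p j k → p i k
  sub : ∀ i j, p i j → t i j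
  between : ∀ i j k, t i j → t j k → p i k → p i j

/-- The relation on `T_n`: `(t₁,p₁) ≤ (t₂,p₂)` iff `p₁ ⊆ p₂` and `t₂ ∩ t₁ᵒᵖ ⊆ p₂`. -/
def TPair.le {n : ℕ} (a b : TPair n) : Prop :=
  (∀ i j, a.p i j → b.p i j) ∧ (∀ i j, b.t i j → a.t j i → b.p i j)

/-! Everything reduces to case analysis on how the total order of the middle pair compares
two elements `i ≠ j`. For antisymmetry, if `(t₁,p₁) ≤ (t₂,p₂) ≤ (t₁,p₁)` and `t₁` and `t₂`
disagreed on `i, j`, the pair would lie in `t₂ ∩ t₁ᵒᵖ ⊆ p₂ ⊆ p₁ ⊆ t₁`, contradicting the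
asymmetry of `t₁`. -/

namespace TPair

variable {n : ℕ} {a b c : TPair n} {i j : Fin n}

theorem t_asymm (a : TPair n) (h : a.t i j) : ¬ a.t j i :=
  fun h' => a.t_irrefl i (a.t_trans i j i h h')

theorem ne_of_t (a : TPair n) (h : a.t i j) : i ≠ j := by
  rintro rfl
  exact a.t_irrefl i h

theorem le.p_imp (h : a.le b) : a.p i j → b.p i j :=
  h.1 i j

theorem le.p_of_t_of_t (h : a.le b) : b.t i j → a.t j i → b.p i j :=
  h.2 i j

theorem le_refl (a : TPair n) : a.le a :=
  ⟨fun _ _ h => h, fun _ _ h h' => absurd h' (a.t_asymm h)⟩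

theorem le_trans (hab : a.le b) (hbc : b.le c) : a.le c := by
  refine ⟨fun i j h => hbc.p_imp (hab.p_imp h), fun i j hc ha => ?_⟩
  rcases b.t_total i j (a.ne_of_t ha).symm with hb | hb
  · exact hbc.p_imp (hab.p_of_t_of_t hb ha)
  · exact hbc.p_of_t_of_t hc hb

theorem t_imp_of_le_of_le (hab : a.le b) (hba : b.le a) (h : a.t i j) : b.t i j := by
  refine (b.t_total i j (a.ne_of_t h)).resolve_right fun hb => ?_
  exact a.t_asymm h (a.sub j i (hba.p_imp (hab.p_of_t_of_t hb h)))

end TPair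

/-- The relation `(t₁,p₁) ≤ (t₂,p₂) ↔ p₁ ⊆ p₂ and t₂ ∩ t₁ᵒᵖ ⊆ p₂` is a partial order
on `T_n`: it is reflexive, transitive, and antisymmetric (where elements of `T_n` are
compared extensionally, as sets of ordered pairs). -/
theorem TPair.le_is_partial_order (n : ℕ) :
    (∀ a : TPair n, TPair.le a a) ∧
    (∀ a b c : TPair n, TPair.le a b → TPair.le b c → TPair.le a c) ∧
    (∀ a b : TPair n, TPair.le a b → TPair.le b a →
      (∀ i j, (a.t i j ↔ b.t i j) ∧ (a.p i j ↔ b.p i j))) :=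
  ⟨TPair.le_refl, fun _ _ _ => TPair.le_trans, fun _ _ hab hba _ _ =>
    ⟨⟨TPair.t_imp_of_le_of_le hab hba, TPair.t_imp_of_le_of_le hba hab⟩, ⟨hab.p_imp, hba.p_imp⟩⟩⟩
end

section
/- For every configuration x = (x_1,…,x_n) of n distinct points in ℝ², there is a unique minimal pair (t,p) ∈ T_n with x ∈ I_n(t,p): namely, t is the lexicographic order (i < j in t iff x_i < x_j lexicographically) and p is defined by i < j in p iff π_1(x_i) = π_1(x_j) and π_2(x_i) < π_2(x_j). Moreover this (t,p) satisfies the consistency condition defining T_n. -/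
/-- Membership of a configuration `x` in `I_n(t,p)`. -/
def memI {n : ℕ} (x : Fin n → ℝ × ℝ) (a : TPair n) : Prop :=
  (∀ i j, a.t i j → (x j).1 ≤ (x i).1 → a.p i j) ∧
  (∀ i j, a.t i j → (x i).1 = (x j).1 → a.p i j ∧ (x i).2 < (x j).2)

/-- The lexicographic total order determined by a configuration. -/
def lexT {n : ℕ} (x : Fin n → ℝ × ℝ) (i j : Fin n) : Prop :=
  (x i).1 < (x j).1 ∨ ((x i).1 = (x j).1 ∧ (x i).2 < (x j).2)

/-- The vertical partial order determined by a configuration. -/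
def vertP {n : ℕ} (x : Fin n → ℝ × ℝ) (i j : Fin n) : Prop :=
  (x i).1 = (x j).1 ∧ (x i).2 < (x j).2

/-! Every pair `(t, p)` with `x ∈ I_n(t, p)` lies above the lexicographic/vertical pair: two
vertically aligned points are comparable in `t`, and the second condition of `I_n` forces them
to be related upwards in `p`; where `t` disagrees with the lexicographic order we have
`π_1(x_j) ≤ π_1(x_i)`, so the first condition puts the pair in `p`. Uniqueness of the minimum is
antisymmetry of the order on `T_n`, which holds because `p ⊆ t` and `t` is total. -/

section Antisymm

variable {n : ℕ} {a b : TPair n}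

theorem TPair.t_of_le_of_le (hab : a.le b) (hba : b.le a) {i j : Fin n} (h : b.t i j) : a.t i j := by
  by_contra hn
  have hij : i ≠ j := fun e => b.t_irrefl i (e ▸ h)
  have hji : a.t j i := (a.t_total i j hij).resolve_left hn
  exact hn (a.sub i j (hba.1 i j (hab.2 i j h hji)))

theorem TPair.rel_iff_of_le_of_le (hab : a.le b) (hba : b.le a) (i j : Fin n) :
    (b.t i j ↔ a.t i j) ∧ (b.p i j ↔ a.p i j) :=
  ⟨⟨TPair.t_of_le_of_le hab hba, TPair.t_of_le_of_le hba hab⟩, ⟨hba.1 i j, hab.1 i j⟩⟩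

end Antisymm

section Lex

variable {n : ℕ} (x : Fin n → ℝ × ℝ) {i j : Fin n}

theorem lexT_iff : lexT x i j ↔ toLex (x i) < toLex (x j) :=
  Prod.Lex.toLex_lt_toLex.symm

theorem lexT_iff' : lexT x i j ↔ (x i).1 ≤ (x j).1 ∧ ((x i).1 = (x j).1 → (x i).2 < (x j).2) := by
  rw [lexT_iff, Prod.Lex.toLex_lt_toLex']

variable {x}

theorem lexT.fst_le (h : lexT x i j) : (x i).1 ≤ (x j).1 :=
  ((lexT_iff' x).1 h).1

theorem lexT.vertP_of_fst_eq (h : lexT x i j) (he : (x i).1 = (x j).1) : vertP x i j :=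
  ⟨he, ((lexT_iff' x).1 h).2 he⟩

theorem TPair.p_of_vertP_of_memI {b : TPair n} (hb : memI x b) (h : vertP x i j) : b.p i j := by
  have hij : i ≠ j := fun e => lt_irrefl _ (e ▸ h.2)
  rcases b.t_total i j hij with ht | ht
  · exact (hb.2 i j ht h.1).1
  · exact absurd (hb.2 j i ht h.1.symm).2 (not_lt.mpr h.2.le)

variable (x)

def lexPair (hx : Function.Injective x) : TPair n where
  t := lexT x
  p := vertP x
  t_irrefl i h := lt_irrefl _ ((lexT_iff x).1 h)
  t_trans i j k hij hjk := (lexT_iff x).2 (((lexT_iff x).1 hij).trans ((lexT_iff x).1 hjk))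
  t_total i j hij := by
    simp only [lexT_iff]
    exact lt_or_gt_of_ne (toLex.injective.ne (hx.ne hij))
  p_irrefl i h := lt_irrefl _ h.2
  p_trans i j k hij hjk := ⟨hij.1.trans hjk.1, hij.2.trans hjk.2⟩
  sub _ _ := Or.inr
  between i j k hij hjk hik :=
    hij.vertP_of_fst_eq (le_antisymm hij.fst_le (hjk.fst_le.trans_eq hik.1.symm))

theorem lexPair_mem (hx : Function.Injective x) : memI x (lexPair x hx) :=
  ⟨fun _ _ h hle => h.vertP_of_fst_eq (le_antisymm h.fst_le hle),
    fun _ _ h he => ⟨h.vertP_of_fst_eq he, (h.vertP_of_fst_eq he).2⟩⟩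

theorem lexPair_le (hx : Function.Injective x) {b : TPair n} (hb : memI x b) :
    (lexPair x hx).le b :=
  ⟨fun _ _ => TPair.p_of_vertP_of_memI hb, fun i j hbt hlex => hb.1 i j hbt hlex.fst_le⟩

end Lex

/-- For every configuration `x` of `n` distinct points in `ℝ²` there is a unique
minimal pair `(t,p) ∈ T_n` with `x ∈ I_n(t,p)`: namely the lexicographic order `t`
and the vertical order `p`.  Moreover this pair satisfies the consistency conditions
defining `T_n`. -/
theorem unique_minimal_pair {n : ℕ} (x : Fin n → ℝ × ℝ) (hx : Function.Injective x) :
    ∃ a : TPair n,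
      a.t = lexT x ∧ a.p = vertP x ∧
      memI x a ∧
      (∀ b : TPair n, memI x b → TPair.le a b) ∧
      (∀ b : TPair n, memI x b → (∀ c : TPair n, memI x c → TPair.le b c) →
        ∀ i j, (b.t i j ↔ a.t i j) ∧ (b.p i j ↔ a.p i j)) :=
  ⟨lexPair x hx, rfl, rfl, lexPair_mem x hx, fun _ => lexPair_le x hx,
    fun _ hb hmin => TPair.rel_iff_of_le_of_le (lexPair_le x hx hb) (hmin _ (lexPair_mem x hx))⟩
end

section
/- Each space I_n(t,p) ⊆ F(n) is contractible; in particular, for the standard total order t on {1,…,n}, the projection forgetting the last point α : I_n(t,p) → I_{n-1}(t',p') is a homotopy equivalence, with a homotopy inverse β placing the n-th point at (1+max_i π_1(x_i), 1+max_i π_2(x_i)). -/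
/-- The subspace `I_n(t,p)` of the configuration space `F(n)` of `n` ordered distinct
points in `ℝ²`. -/
def Iset (n : ℕ) (a : TPair n) : Set (Fin n → ℝ × ℝ) :=
  {x | Function.Injective x ∧ memI x a}

namespace IsetAux

attribute [local instance] Classical.propDecidable

variable {n : ℕ}

/-- The rank of `i` in the total order `t`. -/
noncomputable def rk (a : TPair n) (i : Fin n) : ℝ :=
  ((Finset.univ.filter (fun j => a.t j i)).card : ℝ)

lemma rk_lt (a : TPair n) {i j : Fin n} (h : a.t i j) : rk a i < rk a j := by
  have hsub : Finset.univ.filter (fun k => a.t k i) ⊂ Finset.univ.filter (fun k => a.t k j) := by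
    constructor
    · intro k hk
      simp only [Finset.mem_filter, Finset.mem_univ, true_and] at hk ⊢
      exact a.t_trans _ _ _ hk h
    · intro hle
      have : i ∈ Finset.univ.filter (fun k => a.t k i) := hle (by simp [h])
      simp only [Finset.mem_filter] at this
      exact a.t_irrefl i this.2
  have := Finset.card_lt_card hsub
  unfold rk
  exact_mod_cast this

lemma memI_injective {a : TPair n} {x : Fin n → ℝ × ℝ} (hx : memI x a) :
    Function.Injective x := by
  intro i j hij
  by_contra hne
  rcases a.t_total i j hne with h | h
  · have := (hx.2 i j h (by rw [hij])).2
    rw [hij] at this; exact lt_irrefl _ this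
  · have := (hx.2 j i h (by rw [hij])).2
    rw [hij] at this; exact lt_irrefl _ this

lemma memI_fst_lt {a : TPair n} {x : Fin n → ℝ × ℝ} (hx : memI x a) {i j : Fin n}
    (ht : a.t i j) (hp : ¬ a.p i j) : (x i).1 < (x j).1 := by
  by_contra h
  push_neg at h
  exact hp (hx.1 i j ht h)

lemma interp {s b c d e : ℝ} (h0 : 0 ≤ s) (h1 : s ≤ 1) (hbd : b < d) (hce : c < e) :
    (1 - s) * b + s * c < (1 - s) * d + s * e := by
  rcases eq_or_lt_of_le h0 with h | h
  · subst h; simpa using hbd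
  · nlinarith [mul_pos h (sub_pos.2 hce), mul_nonneg (sub_nonneg.2 h1) (sub_pos.2 hbd).le]

lemma memA {a : TPair n} {x : Fin n → ℝ × ℝ} (hx : memI x a) {s : ℝ}
    (h0 : 0 ≤ s) (h1 : s ≤ 1) :
    memI (fun i => ((x i).1, (1 - s) * (x i).2 + s * rk a i)) a := by
  refine ⟨fun i j ht hle => hx.1 i j ht hle, fun i j ht heq => ?_⟩
  obtain ⟨hp, hlt⟩ := hx.2 i j ht heq
  exact ⟨hp, interp h0 h1 hlt (rk_lt a ht)⟩

lemma memB {a : TPair n} {x : Fin n → ℝ × ℝ} (hx : memI x a) {s : ℝ}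
    (h0 : 0 ≤ s) (h1 : s ≤ 1) :
    memI (fun i => ((1 - s) * (x i).1 + s * rk a i, rk a i)) a := by
  constructor
  · intro i j ht hle
    by_contra hp
    have := interp h0 h1 (memI_fst_lt hx ht hp) (rk_lt a ht)
    simp only at hle
    linarith
  · intro i j ht heq
    refine ⟨?_, rk_lt a ht⟩
    by_contra hp
    have := interp h0 h1 (memI_fst_lt hx ht hp) (rk_lt a ht)
    simp only at heq
    linarith

lemma c_mem (a : TPair n) : (fun i => (rk a i, rk a i)) ∈ Iset n a := by
  have hm : memI (fun i => (rk a i, rk a i)) a := by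
    constructor
    · intro i j ht hle
      exact absurd hle (not_le.2 (rk_lt a ht))
    · intro i j ht heq
      exact absurd heq (ne_of_lt (rk_lt a ht))
  exact ⟨memI_injective hm, hm⟩
noncomputable def fA (a : TPair n) : C(↥(Iset n a), ↥(Iset n a)) :=
  ⟨fun x => ⟨fun i => ((x.1 i).1, rk a i),
    by
      have hm := memB (a := a) x.2.2 (s := 0) le_rfl zero_le_one
      simp only [sub_zero, one_mul, zero_mul, add_zero] at hm
      exact ⟨memI_injective hm, hm⟩⟩,
    by
      refine Continuous.subtype_mk ?_ _
      refine continuous_pi fun i => ?_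
      exact (((continuous_apply i).comp continuous_subtype_val).fst).prodMk continuous_const⟩

noncomputable def cpt (a : TPair n) : ↥(Iset n a) := ⟨fun i => (rk a i, rk a i), c_mem a⟩

noncomputable def HA (a : TPair n) : (ContinuousMap.id ↥(Iset n a)).Homotopy (fA a) where
  toFun := fun q => ⟨fun i => ((q.2.1 i).1, (1 - (q.1 : ℝ)) * (q.2.1 i).2 + (q.1 : ℝ) * rk a i),
      by
        have hm := memA (a := a) q.2.2.2 q.1.2.1 q.1.2.2
        exact ⟨memI_injective hm, hm⟩⟩
  continuous_toFun := by
      refine Continuous.subtype_mk ?_ _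
      refine continuous_pi fun i => ?_
      have hx : Continuous fun q : unitInterval × ↥(Iset n a) => (q.2.1 i) :=
        (continuous_apply i).comp (continuous_subtype_val.comp continuous_snd)
      have hs : Continuous fun q : unitInterval × ↥(Iset n a) => (q.1 : ℝ) :=
        continuous_subtype_val.comp continuous_fst
      exact hx.fst.prodMk (((continuous_const.sub hs).mul hx.snd).add (hs.mul continuous_const))
  map_zero_left x := Subtype.ext (funext fun i => by simp)
  map_one_left x := Subtype.ext (funext fun i => by simp [fA])

noncomputable def HB (a : TPair n) :
    (fA a).Homotopy (ContinuousMap.const ↥(Iset n a) (cpt a)) where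
  toFun := fun q => ⟨fun i => ((1 - (q.1 : ℝ)) * (q.2.1 i).1 + (q.1 : ℝ) * rk a i, rk a i),
      by
        have hm := memB (a := a) q.2.2.2 q.1.2.1 q.1.2.2
        exact ⟨memI_injective hm, hm⟩⟩
  continuous_toFun := by
      refine Continuous.subtype_mk ?_ _
      refine continuous_pi fun i => ?_
      have hx : Continuous fun q : unitInterval × ↥(Iset n a) => (q.2.1 i) :=
        (continuous_apply i).comp (continuous_subtype_val.comp continuous_snd)
      have hs : Continuous fun q : unitInterval × ↥(Iset n a) => (q.1 : ℝ) :=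
        continuous_subtype_val.comp continuous_fst
      exact ((((continuous_const.sub hs).mul hx.fst).add (hs.mul continuous_const)).prodMk
        continuous_const)
  map_zero_left x := Subtype.ext (funext fun i => by simp [fA])
  map_one_left x := Subtype.ext (funext fun i => by simp [cpt])

theorem iset_contractible (a : TPair n) : ContractibleSpace ↥(Iset n a) :=
  (contractible_iff_id_nullhomotopic _).2 ⟨cpt a, ⟨(HA a).trans (HB a)⟩⟩

lemma homotopic_of_contractible {X Y : Type*} [TopologicalSpace X] [TopologicalSpace Y]
    [ContractibleSpace Y] (f g : C(X, Y)) : f.Homotopic g := by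
  obtain ⟨y, hy⟩ := id_nullhomotopic Y
  have hf : f.Homotopic (ContinuousMap.const X y) := by
    have := hy.comp (ContinuousMap.Homotopic.refl f)
    simpa using this
  have hg : g.Homotopic (ContinuousMap.const X y) := by
    have := hy.comp (ContinuousMap.Homotopic.refl g)
    simpa using this
  exact hf.trans hg.symm
lemma continuous_sup {g : ℝ × ℝ → ℝ} (hg : Continuous g) (n : ℕ) :
    Continuous fun y : Fin n → ℝ × ℝ => ⨆ i, g (y i) := by
  rcases isEmpty_or_nonempty (Fin n) with h | h
  · have heq : (fun y : Fin n → ℝ × ℝ => ⨆ i, g (y i)) = fun _ => (0 : ℝ) := by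
      funext y
      rw [iSup, Set.range_eq_empty, Real.sSup_empty]
    rw [heq]
    exact continuous_const
  · have heq : (fun y : Fin n → ℝ × ℝ => ⨆ i, g (y i))
        = Finset.univ.sup' Finset.univ_nonempty (fun i (y : Fin n → ℝ × ℝ) => g (y i)) := by
      funext y
      rw [Finset.sup'_apply, Finset.sup'_univ_eq_ciSup]
    rw [heq]
    exact Continuous.finset_sup' _ fun i _ => hg.comp (continuous_apply i)

end IsetAux

open IsetAux in
/-- Each `I_n(t,p)` is contractible; in particular, for the standard total order the
projection `α` forgetting the last point is a homotopy equivalence, with homotopy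
inverse `β` placing the extra point at `(1 + max πᵢ₁, 1 + max πᵢ₂)`. -/
theorem Iset_contractible :
    (∀ (n : ℕ) (a : TPair n), ContractibleSpace ↥(Iset n a)) ∧
    (∀ (n : ℕ) (a : TPair (n + 1)) (a' : TPair n),
      (∀ i j, a.t i j ↔ i < j) →
      (∀ i j, a'.t i j ↔ i < j) →
      (∀ i j, a'.p i j ↔ a.p i.castSucc j.castSucc) →
      ∃ (α : C(↥(Iset (n + 1) a), ↥(Iset n a')))
        (β : C(↥(Iset n a'), ↥(Iset (n + 1) a))),
        (∀ (x : ↥(Iset (n + 1) a)) (i : Fin n), ((α x : Fin n → ℝ × ℝ) i) = x.1 i.castSucc) ∧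
        (∀ (y : ↥(Iset n a')) (i : Fin n), ((β y : Fin (n + 1) → ℝ × ℝ) i.castSucc) = y.1 i) ∧
        (∀ y : ↥(Iset n a'),
          ((β y : Fin (n + 1) → ℝ × ℝ) (Fin.last n))
            = (1 + ⨆ i : Fin n, (y.1 i).1, 1 + ⨆ i : Fin n, (y.1 i).2)) ∧
        (α.comp β).Homotopic (ContinuousMap.id _) ∧
        (β.comp α).Homotopic (ContinuousMap.id _)) := by
  refine ⟨fun n a => iset_contractible a, ?_⟩
  intro n a a' ht ht' hp
  have hcast : ∀ (i j : Fin n), a.t i.castSucc j.castSucc ↔ a'.t i j := fun i j => by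
    rw [ht, ht', Fin.castSucc_lt_castSucc_iff]
  -- the map α forgetting the last point
  have amem : ∀ x : ↥(Iset (n + 1) a), (fun i : Fin n => x.1 i.castSucc) ∈ Iset n a' := by
    intro x
    refine ⟨fun i j hij => Fin.castSucc_injective n (x.2.1 hij), ?_, ?_⟩
    · intro i j htij hle
      exact (hp i j).2 (x.2.2.1 _ _ ((hcast i j).2 htij) hle)
    · intro i j htij heq
      obtain ⟨hpij, hlt⟩ := x.2.2.2 _ _ ((hcast i j).2 htij) heq
      exact ⟨(hp i j).2 hpij, hlt⟩
  -- the map β adding a point at the top right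
  have bmem : ∀ y : ↥(Iset n a'),
      Fin.snoc y.1 (1 + ⨆ i : Fin n, (y.1 i).1, 1 + ⨆ i : Fin n, (y.1 i).2) ∈ Iset (n + 1) a := by
    intro y
    set z : Fin (n + 1) → ℝ × ℝ :=
      Fin.snoc y.1 (1 + ⨆ i : Fin n, (y.1 i).1, 1 + ⨆ i : Fin n, (y.1 i).2) with hz
    have hb1 : ∀ i, (y.1 i).1 ≤ ⨆ i, (y.1 i).1 := fun i =>
      le_ciSup (f := fun i => (y.1 i).1) (Set.Finite.bddAbove (Set.finite_range _)) i
    have key : ∀ i : Fin n, (z i.castSucc).1 < (z (Fin.last n)).1 := by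
      intro i
      simp only [hz, Fin.snoc_castSucc, Fin.snoc_last]
      have := hb1 i
      linarith
    have hm : memI z a := by
      constructor
      · intro i j htij hle
        have hij : i < j := (ht i j).1 htij
        obtain ⟨i', rfl⟩ := Fin.eq_castSucc_of_ne_last (Fin.ne_last_of_lt hij)
        rcases eq_or_ne j (Fin.last n) with rfl | hj
        · exact absurd hle (not_le.2 (key i'))
        · obtain ⟨j', rfl⟩ := Fin.eq_castSucc_of_ne_last hj
          have h' : a'.t i' j' := (ht' i' j').2 (Fin.castSucc_lt_castSucc_iff.1 hij)
          have hle' : (y.1 j').1 ≤ (y.1 i').1 := by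
            simpa only [hz, Fin.snoc_castSucc] using hle
          exact (hp i' j').1 (y.2.2.1 i' j' h' hle')
      · intro i j htij heq
        have hij : i < j := (ht i j).1 htij
        obtain ⟨i', rfl⟩ := Fin.eq_castSucc_of_ne_last (Fin.ne_last_of_lt hij)
        rcases eq_or_ne j (Fin.last n) with rfl | hj
        · exact absurd heq (ne_of_lt (key i'))
        · obtain ⟨j', rfl⟩ := Fin.eq_castSucc_of_ne_last hj
          have h' : a'.t i' j' := (ht' i' j').2 (Fin.castSucc_lt_castSucc_iff.1 hij)
          have heq' : (y.1 i').1 = (y.1 j').1 := by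
            simpa only [hz, Fin.snoc_castSucc] using heq
          obtain ⟨hpij, hlt⟩ := y.2.2.2 i' j' h' heq'
          refine ⟨(hp i' j').1 hpij, ?_⟩
          simpa only [hz, Fin.snoc_castSucc] using hlt
    exact ⟨memI_injective hm, hm⟩
  have hsup1 : Continuous fun y : ↥(Iset n a') => ⨆ i, (y.1 i).1 :=
    (continuous_sup continuous_fst n).comp continuous_subtype_val
  have hsup2 : Continuous fun y : ↥(Iset n a') => ⨆ i, (y.1 i).2 :=
    (continuous_sup continuous_snd n).comp continuous_subtype_val
  let αc : C(↥(Iset (n + 1) a), ↥(Iset n a')) :=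
    ⟨fun x => ⟨fun i => x.1 i.castSucc, amem x⟩,
      Continuous.subtype_mk
        (continuous_pi fun i => (continuous_apply i.castSucc).comp continuous_subtype_val) _⟩
  let βc : C(↥(Iset n a'), ↥(Iset (n + 1) a)) :=
    ⟨fun y => ⟨Fin.snoc y.1 (1 + ⨆ i : Fin n, (y.1 i).1, 1 + ⨆ i : Fin n, (y.1 i).2), bmem y⟩, by
      refine Continuous.subtype_mk (continuous_pi fun k => ?_) _
      induction k using Fin.lastCases with
      | last =>
        simp only [Fin.snoc_last]
        exact (continuous_const.add hsup1).prodMk (continuous_const.add hsup2)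
      | cast i =>
        simp only [Fin.snoc_castSucc]
        exact (continuous_apply i).comp continuous_subtype_val⟩
  refine ⟨αc, βc, fun x i => rfl, ?_, ?_, ?_, ?_⟩
  · intro y i
    show (Fin.snoc y.1 _ : Fin (n + 1) → ℝ × ℝ) i.castSucc = y.1 i
    exact Fin.snoc_castSucc _ _ i
  · intro y
    show (Fin.snoc y.1 _ : Fin (n + 1) → ℝ × ℝ) (Fin.last n) = _
    exact Fin.snoc_last _ _
  · have : ContractibleSpace ↥(Iset n a') := iset_contractible a'
    exact homotopic_of_contractible _ _
  · have : ContractibleSpace ↥(Iset (n + 1) a) := iset_contractible a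
    exact homotopic_of_contractible _ _
end
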